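/- arXiv:1403.8042 — 7 statements merged into one kernel-verified Lean document; each statement's English description precedes it below -/
import Mathlib

section
/- Let X be an exponentially distributed random variable with mean Ω > 0, let δ > 0 and P̄ > 0, and let x0 > 0 be the unique solution of (δ/Ω)·E1(x0/Ω) = P̄, where E1(z) = ∫_z^{∞}(e^{−t}/t) dt. Define P*(x) = δ/x for x ≥ x0 and P*(x) = 0 for 0 ≤ x < x0. Then E[P*(X)] = P̄, and for every measurable function P : [0,∞) → [0,∞) with E[P(X)] ≤ P̄, the outage probability satisfies Pr{P(X)·X < δ} ≥ Pr{P*(X)·X < δ} = 1 − e^{−x0/Ω}. -/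
open MeasureTheory ProbabilityTheory

/-- The exponential integral `E1(z) = ∫_z^∞ e^{-t}/t dt`. -/
noncomputable def expInt (z : ℝ) : ℝ := ∫ t in Set.Ioi z, Real.exp (-t) / t

/-!
Serving the channel state `x > 0` costs at least `δ / x`, so a success set
`A = {x | δ ≤ P x * x}` costs at least `∫_A δ / x`. The cost `δ / x` is at most `δ / x0` on
`[x0, ∞)` and at least `δ / x0` on `(0, x0)`; hence a set `A` of larger probability than
`[x0, ∞)` costs strictly more than `[x0, ∞)` does (a bathtub argument). For the exponential law
the cost of `[x0, ∞)` is `(δ/Ω) E1(x0/Ω) = P̄` after the substitution `t = x / Ω`.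
-/

open Real Set
open scoped ENNReal

section Bathtub

variable {α : Type*} [MeasurableSpace α] {ν : Measure α} {f : α → ℝ≥0∞} {s t : Set α}
  {c : ℝ≥0∞}

theorem measure_le_of_setLIntegral_le (hc₀ : c ≠ 0) (hc : c ≠ ∞) (hs : MeasurableSet s)
    (ht : MeasurableSet t) (hf_le : ∀ x ∈ t \ s, f x ≤ c) (hf_ge : ∀ x ∈ s \ t, c ≤ f x)
    (hfin : ∫⁻ x in t, f x ∂ν ≠ ∞) (hint : ∫⁻ x in s, f x ∂ν ≤ ∫⁻ x in t, f x ∂ν) :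
    ν s ≤ ν t := by
  by_contra! hts
  have hdiff : ν (t \ s) < ν (s \ t) := by
    by_contra! h
    refine hts.not_ge ?_
    rw [← measure_inter_add_sdiff s ht, ← measure_inter_add_sdiff t hs, inter_comm]
    gcongr
  have hfin' : ∫⁻ x in t ∩ s, f x ∂ν ≠ ∞ :=
    ne_top_of_le_ne_top hfin (lintegral_mono_set inter_subset_left)
  refine hint.not_gt ?_
  calc ∫⁻ x in t, f x ∂ν = ∫⁻ x in t ∩ s, f x ∂ν + ∫⁻ x in t \ s, f x ∂ν :=
        (lintegral_inter_add_sdiff f t hs).symm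
    _ ≤ ∫⁻ x in t ∩ s, f x ∂ν + c * ν (t \ s) := by
        rw [← setLIntegral_const]
        exact add_le_add le_rfl (setLIntegral_mono' (ht.diff hs) hf_le)
    _ < ∫⁻ x in t ∩ s, f x ∂ν + c * ν (s \ t) :=
        ENNReal.add_lt_add_left hfin' ((ENNReal.mul_lt_mul_iff_right hc₀ hc).mpr hdiff)
    _ ≤ ∫⁻ x in s ∩ t, f x ∂ν + ∫⁻ x in s \ t, f x ∂ν := by
        rw [inter_comm, ← setLIntegral_const]
        exact add_le_add le_rfl (setLIntegral_mono' (hs.diff ht) hf_ge)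
    _ = ∫⁻ x in s, f x ∂ν := lintegral_inter_add_sdiff f s ht

end Bathtub

section ChannelInversion

variable {δ a : ℝ}

noncomputable def truncatedInversion (δ a x : ℝ) : ℝ := if a ≤ x then δ / x else 0

theorem measurable_truncatedInversion : Measurable (truncatedInversion δ a) :=
  Measurable.ite measurableSet_Ici (measurable_const.div measurable_id) measurable_const

theorem lintegral_ofReal_truncatedInversion (ν : Measure ℝ) :
    ∫⁻ x, ENNReal.ofReal (truncatedInversion δ a x) ∂ν
      = ∫⁻ x in Ici a, ENNReal.ofReal (δ / x) ∂ν := by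
  rw [← lintegral_indicator measurableSet_Ici]
  congr 1 with x
  by_cases hx : a ≤ x <;> simp [truncatedInversion, indicator, hx]

theorem setOf_truncatedInversion_mul_lt (hδ : 0 < δ) (ha : 0 < a) :
    {x | truncatedInversion δ a x * x < δ} = Iio a := by
  ext x
  by_cases hx : a ≤ x
  · simp [truncatedInversion, hx, div_mul_cancel₀ δ (ha.trans_le hx).ne']
  · simp [truncatedInversion, hx, hδ, not_le.mp hx]

theorem measure_Iio_le_measure_mul_lt {ν : Measure ℝ} [IsProbabilityMeasure ν] (hδ : 0 < δ)
    (ha : 0 < a) {P : ℝ → ℝ} (hP : Measurable P) (hP₀ : ∀ x, 0 ≤ P x)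
    (hfin : ∫⁻ x in Ici a, ENNReal.ofReal (δ / x) ∂ν ≠ ∞)
    (hPint : ∫⁻ x, ENNReal.ofReal (P x) ∂ν ≤ ∫⁻ x in Ici a, ENNReal.ofReal (δ / x) ∂ν) :
    ν (Iio a) ≤ ν {x | P x * x < δ} := by
  set A := {x | δ ≤ P x * x}
  have hA : MeasurableSet A := measurableSet_le measurable_const (hP.mul measurable_id)
  have hA_pos : ∀ x ∈ A, 0 < x := fun x hx => pos_of_mul_pos_right (hδ.trans_le hx) (hP₀ x)
  have hA_cost : ∫⁻ x in A, ENNReal.ofReal (δ / x) ∂ν ≤ ∫⁻ x, ENNReal.ofReal (P x) ∂ν :=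
    calc ∫⁻ x in A, ENNReal.ofReal (δ / x) ∂ν ≤ ∫⁻ x in A, ENNReal.ofReal (P x) ∂ν :=
          setLIntegral_mono' hA fun x hx =>
            ENNReal.ofReal_le_ofReal ((div_le_iff₀ (hA_pos x hx)).mpr hx)
      _ ≤ ∫⁻ x, ENNReal.ofReal (P x) ∂ν := setLIntegral_le_lintegral _ _
  have hA_le : ν A ≤ ν (Ici a) := by
    refine measure_le_of_setLIntegral_le (c := ENNReal.ofReal (δ / a)) (by simp [hδ, ha])
      ENNReal.ofReal_ne_top hA measurableSet_Ici (fun x hx => ?_) (fun x hx => ?_) hfin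
      (hA_cost.trans hPint)
    · exact ENNReal.ofReal_le_ofReal (div_le_div_of_nonneg_left hδ.le ha hx.1)
    · exact ENNReal.ofReal_le_ofReal
        (div_le_div_of_nonneg_left hδ.le (hA_pos x hx.1) (not_le.mp hx.2).le)
  calc ν (Iio a) = 1 - ν (Ici a) := by rw [← compl_Ici, prob_compl_eq_one_sub measurableSet_Ici]
    _ ≤ 1 - ν A := by gcongr
    _ = ν {x | P x * x < δ} := by
        rw [← prob_compl_eq_one_sub hA]
        congr 1 with x
        simp [A]

end ChannelInversion

section Exponential

variable {r : ℝ}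

theorem expMeasure_Iio (hr : 0 < r) {a : ℝ} (ha : 0 ≤ a) :
    expMeasure r (Iio a) = ENNReal.ofReal (1 - exp (-(r * a))) := by
  have hatom : expMeasure r {a} = 0 :=
    withDensity_absolutelyContinuous _ _ (Real.volume_singleton)
  rw [measure_congr (Iio_ae_eq_Iic' hatom), expMeasure, gammaMeasure,
    withDensity_apply _ measurableSet_Iic]
  exact (lintegral_exponentialPDF_eq_antiDeriv hr a).trans (by rw [if_pos ha])

theorem integrableOn_Ioi_exp_mul_div (hr : 0 < r) {a δ : ℝ} (ha : 0 < a) (hδ : 0 ≤ δ) :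
    IntegrableOn (fun x => r * exp (-(r * x)) * (δ / x)) (Ioi a) := by
  refine ((exp_neg_integrableOn_Ioi a hr).const_mul (r * (δ / a))).mono'
    (by fun_prop) ((ae_restrict_iff' measurableSet_Ioi).mpr (.of_forall fun x hxa => ?_))
  have hx : 0 < x := ha.trans hxa
  rw [Real.norm_of_nonneg (by positivity), neg_mul, mul_right_comm]
  gcongr
  exact hxa.le

theorem integral_Ioi_exp_mul_div (hr : 0 < r) (a δ : ℝ) :
    ∫ x in Ioi a, r * exp (-(r * x)) * (δ / x) = δ * r * expInt (r * a) := by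
  have hsubst : (fun x => r * exp (-(r * x)) * (δ / x))
      = fun x => (δ * r ^ 2) * (exp (-(r * x)) / (r * x)) := by
    ext x
    rcases eq_or_ne x 0 with rfl | hx
    · simp
    · field_simp
  rw [hsubst, integral_const_mul, integral_comp_mul_left_Ioi (fun t => exp (-t) / t) a hr,
    smul_eq_mul, expInt]
  field_simp

theorem setLIntegral_Ici_ofReal_div_expMeasure (hr : 0 < r) {a δ : ℝ} (ha : 0 < a)
    (hδ : 0 ≤ δ) :
    ∫⁻ x in Ici a, ENNReal.ofReal (δ / x) ∂expMeasure r
      = ENNReal.ofReal (δ * r * expInt (r * a)) := by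
  change ∫⁻ x in Ici a, _ ∂volume.withDensity (exponentialPDF r) = _
  rw [setLIntegral_withDensity_eq_setLIntegral_mul _ (f := exponentialPDF r)
    (measurable_exponentialPDFReal r).ennreal_ofReal (by fun_prop) measurableSet_Ici,
    ← restrict_Ioi_eq_restrict_Ici, ← integral_Ioi_exp_mul_div hr a δ,
    ofReal_integral_eq_lintegral_ofReal (integrableOn_Ioi_exp_mul_div hr ha hδ)
      ((ae_restrict_iff' measurableSet_Ioi).mpr (.of_forall fun x hx => by
        have : 0 < x := ha.trans hx
        positivity))]
  refine setLIntegral_congr_fun measurableSet_Ioi fun x hx => ?_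
  rw [Pi.mul_apply, exponentialPDF_of_nonneg (ha.trans hx).le,
    ← ENNReal.ofReal_mul (by positivity)]

end Exponential

theorem stmt_5_general {Ωsp : Type*} [MeasurableSpace Ωsp] (μ : Measure Ωsp)
    (X : Ωsp → ℝ) (hX : Measurable X)
    (Ω δ Pbar x0 : ℝ) (hΩ : 0 < Ω) (hδ : 0 < δ) (hx0 : 0 < x0)
    (hXdist : Measure.map X μ = expMeasure (1 / Ω))
    (hx0sol : (δ / Ω) * expInt (x0 / Ω) = Pbar)
    (Pstar : ℝ → ℝ) (hPstar : ∀ x, Pstar x = if x0 ≤ x then δ / x else 0) :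
    (∫⁻ ω, ENNReal.ofReal (Pstar (X ω)) ∂μ = ENNReal.ofReal Pbar) ∧
    (μ {ω | Pstar (X ω) * X ω < δ} = ENNReal.ofReal (1 - Real.exp (-x0 / Ω))) ∧
    (∀ P : ℝ → ℝ, Measurable P → (∀ x, 0 ≤ P x) →
      (∫⁻ ω, ENNReal.ofReal (P (X ω)) ∂μ) ≤ ENNReal.ofReal Pbar →
      μ {ω | P (X ω) * X ω < δ} ≥ μ {ω | Pstar (X ω) * X ω < δ}) := by
  obtain rfl : Pstar = truncatedInversion δ x0 := funext hPstar
  have hr : 0 < 1 / Ω := by positivity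
  have := isProbabilityMeasure_expMeasure hr
  have hcost : ∫⁻ x in Ici x0, ENNReal.ofReal (δ / x) ∂expMeasure (1 / Ω)
      = ENNReal.ofReal Pbar := by
    rw [setLIntegral_Ici_ofReal_div_expMeasure hr hx0 hδ.le, ← hx0sol]
    ring_nf
  have hlintegral (g : ℝ → ℝ≥0∞) (hg : Measurable g) :
      ∫⁻ ω, g (X ω) ∂μ = ∫⁻ x, g x ∂expMeasure (1 / Ω) := by
    rw [← hXdist, lintegral_map hg hX]
  have hprob (s : Set ℝ) (hs : MeasurableSet s) : μ (X ⁻¹' s) = expMeasure (1 / Ω) s := by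
    rw [← hXdist, Measure.map_apply hX hs]
  have houtage : μ {ω | truncatedInversion δ x0 (X ω) * X ω < δ}
      = expMeasure (1 / Ω) (Iio x0) := by
    rw [← hprob _ measurableSet_Iio, ← setOf_truncatedInversion_mul_lt hδ hx0, preimage_ofPred_eq]
  refine ⟨?_, ?_, fun P hP hP₀ hPint => ?_⟩
  · rw [hlintegral _ measurable_truncatedInversion.ennreal_ofReal,
      lintegral_ofReal_truncatedInversion, hcost]
  · rw [houtage, expMeasure_Iio hr hx0.le]
    ring_nf
  · rw [houtage, ge_iff_le, ← preimage_ofPred_eq (p := fun x => P x * x < δ),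
      hprob _ (measurableSet_lt (by fun_prop) measurable_const)]
    exact measure_Iio_le_measure_mul_lt hδ hx0 hP hP₀ (hcost ▸ ENNReal.ofReal_ne_top)
      (by rwa [hcost, ← hlintegral _ hP.ennreal_ofReal])

/-- `X` is exponential with mean `Ω` (rate `1/Ω`), `x0 > 0` solves
`(δ/Ω) E1(x0/Ω) = P̄`, and `P*(x) = δ/x` for `x ≥ x0`, `0` otherwise. Then
`E[P*(X)] = P̄`, and every measurable nonnegative power allocation `P` with
`E[P(X)] ≤ P̄` has outage probability
`Pr{P(X) X < δ} ≥ Pr{P*(X) X < δ} = 1 - e^{-x0/Ω}`. -/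
theorem stmt_5 {Ωsp : Type*} [MeasurableSpace Ωsp] (μ : Measure Ωsp)
    [IsProbabilityMeasure μ]
    (X : Ωsp → ℝ) (hX : Measurable X)
    (Ω δ Pbar x0 : ℝ) (hΩ : 0 < Ω) (hδ : 0 < δ) (hPbar : 0 < Pbar) (hx0 : 0 < x0)
    (hXdist : Measure.map X μ = expMeasure (1 / Ω))
    (hx0sol : (δ / Ω) * expInt (x0 / Ω) = Pbar)
    (Pstar : ℝ → ℝ) (hPstar : ∀ x, Pstar x = if x0 ≤ x then δ / x else 0) :
    (∫⁻ ω, ENNReal.ofReal (Pstar (X ω)) ∂μ = ENNReal.ofReal Pbar) ∧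
    (μ {ω | Pstar (X ω) * X ω < δ} = ENNReal.ofReal (1 - Real.exp (-x0 / Ω))) ∧
    (∀ P : ℝ → ℝ, Measurable P → (∀ x, 0 ≤ P x) →
      (∫⁻ ω, ENNReal.ofReal (P (X ω)) ∂μ) ≤ ENNReal.ofReal Pbar →
      μ {ω | P (X ω) * X ω < δ} ≥ μ {ω | Pstar (X ω) * X ω < δ}) :=
  stmt_5_general μ X hX Ω δ Pbar x0 hΩ hδ hx0 hXdist hx0sol Pstar hPstar
end

section
/- Let X and Y be independent exponentially distributed random variables with means Ω_X > 0 and Ω_Y > 0, let δ1, δ2, x0, y0 > 0, and define D_R = {(x,y) : x ≥ x0, y ≥ y0} and P_{R,st}(x,y) = max{δ1/y, δ2/x} for (x,y) ∈ D_R and P_{R,st}(x,y) = 0 otherwise. Let 0 < P_avg ≤ E[P_{R,st}(X,Y)] and let ρ > 0 satisfy E[P_{R,st}(X,Y)·1{P_{R,st}(X,Y) ≤ ρ}] = P_avg. Define P*(x,y) = P_{R,st}(x,y) if P_{R,st}(x,y) ≤ ρ and P*(x,y) = 0 otherwise. Then E[P*(X,Y)] ≤ P_avg, and for every measurable function P :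 [0,∞)² → [0,∞) with E[P(X,Y)] ≤ P_avg, it holds that Pr{(X,Y) ∈ D_R and (P(X,Y)·Y < δ1 or P(X,Y)·X < δ2)} ≥ Pr{(X,Y) ∈ D_R and (P*(X,Y)·Y < δ1 or P*(X,Y)·X < δ2)}. -/
/-!
Inside `D_R` an allocation `P` serves the state `(x, y)` exactly when `P_{R,st}(x, y) ≤ P(x, y)`,
so serving a set `A` of states costs at least `∫_A P_{R,st}`. The truncated allocation serves
`B = {P_{R,st} ≤ ρ}` and spends the whole budget on it. Compared with `B`, any other served set
`A` within budget pays more than `ρ` per unit of probability on `A \ B` and saves at most `ρ`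
per unit on `B \ A`, hence `Pr(A \ B) ≤ Pr(B \ A)`, i.e. `Pr(A) ≤ Pr(B)` (the bathtub principle).
-/

open MeasureTheory ProbabilityTheory Set
open scoped ENNReal

section Bathtub

variable {Ω : Type*} [MeasurableSpace Ω] {μ : Measure Ω} {A B : Set Ω}

theorem measure_sdiff_le_measure_sdiff_of_setLIntegral_le {f : Ω → ℝ≥0∞} {ρ : ℝ≥0∞}
    (hρ0 : ρ ≠ 0) (hρ : ρ ≠ ∞) (hA : MeasurableSet A) (hB : MeasurableSet B)
    (hfB : ∀ ω ∈ B, f ω ≤ ρ) (hfA : ∀ ω ∈ A \ B, ρ ≤ f ω)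
    (hbudget : ∫⁻ ω in A, f ω ∂μ ≤ ∫⁻ ω in B, f ω ∂μ) (hfin : ∫⁻ ω in B, f ω ∂μ ≠ ∞) :
    μ (A \ B) ≤ μ (B \ A) := by
  have hfin' : ∫⁻ ω in A ∩ B, f ω ∂μ ≠ ∞ :=
    ne_top_of_le_ne_top hfin (lintegral_mono_set inter_subset_right)
  have hlow : ρ * μ (A \ B) ≤ ∫⁻ ω in A \ B, f ω ∂μ := by
    rw [← setLIntegral_const]
    exact setLIntegral_mono' (hA.diff hB) hfA
  have hup : ∫⁻ ω in B \ A, f ω ∂μ ≤ ρ * μ (B \ A) := by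
    rw [← setLIntegral_const]
    exact setLIntegral_mono' (hB.diff hA) fun ω hω => hfB ω hω.1
  have : ∫⁻ ω in A ∩ B, f ω ∂μ + ρ * μ (A \ B) ≤ ∫⁻ ω in A ∩ B, f ω ∂μ + ρ * μ (B \ A) :=
    calc _ ≤ ∫⁻ ω in A, f ω ∂μ := by rw [← lintegral_inter_add_sdiff f A hB]; gcongr
      _ ≤ ∫⁻ ω in B, f ω ∂μ := hbudget
      _ = ∫⁻ ω in A ∩ B, f ω ∂μ + ∫⁻ ω in B \ A, f ω ∂μ := by
        rw [← lintegral_inter_add_sdiff f B hA, inter_comm]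
      _ ≤ _ := by gcongr
  exact (ENNReal.mul_le_mul_iff_right hρ0 hρ).mp ((ENNReal.add_le_add_iff_left hfin').mp this)

theorem measure_sdiff_le_measure_sdiff_of_subset {D : Set Ω} (hA : MeasurableSet A)
    (hB : MeasurableSet B) (hAD : A ⊆ D) (hBD : B ⊆ D) (h : μ (A \ B) ≤ μ (B \ A)) :
    μ (D \ B) ≤ μ (D \ A) := by
  have hDBA : D \ B ∩ A = A \ B :=
    Set.ext fun _ => ⟨fun h => ⟨h.2, h.1.2⟩, fun h => ⟨⟨hAD h.1, h.2⟩, h.1⟩⟩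
  have hDAB : D \ A ∩ B = B \ A :=
    Set.ext fun _ => ⟨fun h => ⟨h.2, h.1.2⟩, fun h => ⟨⟨hBD h.1, h.2⟩, h.1⟩⟩
  rw [← measure_inter_add_sdiff (D \ B) hA, ← measure_inter_add_sdiff (D \ A) hB, hDBA, hDAB,
    sdiff_sdiff_comm]
  gcongr

end Bathtub

theorem le_ite_le_self_iff {a ρ : ℝ} (hρ : 0 ≤ ρ) : (a ≤ if a ≤ ρ then a else 0) ↔ a ≤ ρ := by
  split_ifs with h
  · simp only [le_refl, h]
  · exact iff_of_false (fun h0 => h (h0.trans hρ)) h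

section ShortTermPower

variable {δ₁ δ₂ x₀ y₀ : ℝ}

noncomputable def shortTermPower (δ₁ δ₂ x₀ y₀ x y : ℝ) : ℝ :=
  if x₀ ≤ x ∧ y₀ ≤ y then max (δ₁ / y) (δ₂ / x) else 0

theorem measurable_shortTermPower :
    Measurable (Function.uncurry (shortTermPower δ₁ δ₂ x₀ y₀)) :=
  Measurable.ite ((measurableSet_le measurable_const measurable_fst).inter
      (measurableSet_le measurable_const measurable_snd))
    ((measurable_const.div measurable_snd).max (measurable_const.div measurable_fst))
    measurable_const

theorem shortTermPower_of_not_le {x y : ℝ} (h : ¬(x₀ ≤ x ∧ y₀ ≤ y)) :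
    shortTermPower δ₁ δ₂ x₀ y₀ x y = 0 :=
  if_neg h

theorem mul_lt_or_mul_lt_iff_lt_shortTermPower (hx₀ : 0 < x₀) (hy₀ : 0 < y₀) {x y p : ℝ}
    (h : x₀ ≤ x ∧ y₀ ≤ y) :
    p * y < δ₁ ∨ p * x < δ₂ ↔ p < shortTermPower δ₁ δ₂ x₀ y₀ x y := by
  rw [shortTermPower, if_pos h, lt_max_iff, lt_div_iff₀ (hy₀.trans_le h.2),
    lt_div_iff₀ (hx₀.trans_le h.1)]

variable {Ω : Type*} {X Y : Ω → ℝ}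

theorem measurableSet_le_and_le [MeasurableSpace Ω] (hX : Measurable X) (hY : Measurable Y) :
    MeasurableSet {ω | x₀ ≤ X ω ∧ y₀ ≤ Y ω} :=
  (measurableSet_le measurable_const hX).inter (measurableSet_le measurable_const hY)

theorem setOf_outage_eq_sdiff (hx₀ : 0 < x₀) (hy₀ : 0 < y₀) (p : ℝ → ℝ → ℝ) :
    {ω | (x₀ ≤ X ω ∧ y₀ ≤ Y ω) ∧ (p (X ω) (Y ω) * Y ω < δ₁ ∨ p (X ω) (Y ω) * X ω < δ₂)} =
      {ω | x₀ ≤ X ω ∧ y₀ ≤ Y ω} \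
        {ω | shortTermPower δ₁ δ₂ x₀ y₀ (X ω) (Y ω) ≤ p (X ω) (Y ω)} := by
  ext ω
  simp only [mem_ofPred_eq, mem_sdiff, not_le]
  exact and_congr_right (mul_lt_or_mul_lt_iff_lt_shortTermPower hx₀ hy₀)

theorem lintegral_truncated_shortTermPower [MeasurableSpace Ω] (μ : Measure Ω)
    (hX : Measurable X) (hY : Measurable Y) (ρ : ℝ) :
    ∫⁻ ω, ENNReal.ofReal (if shortTermPower δ₁ δ₂ x₀ y₀ (X ω) (Y ω) ≤ ρ
        then shortTermPower δ₁ δ₂ x₀ y₀ (X ω) (Y ω) else 0) ∂μ =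
      ∫⁻ ω in {ω | shortTermPower δ₁ δ₂ x₀ y₀ (X ω) (Y ω) ≤ ρ} ∩ {ω | x₀ ≤ X ω ∧ y₀ ≤ Y ω},
        ENNReal.ofReal (shortTermPower δ₁ δ₂ x₀ y₀ (X ω) (Y ω)) ∂μ := by
  have hf : Measurable fun ω => shortTermPower δ₁ δ₂ x₀ y₀ (X ω) (Y ω) :=
    measurable_shortTermPower.comp (hX.prodMk hY)
  rw [← lintegral_indicator
    ((measurableSet_le hf measurable_const).inter (measurableSet_le_and_le hX hY))]
  refine lintegral_congr fun ω => ?_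
  by_cases hD : x₀ ≤ X ω ∧ y₀ ≤ Y ω
  · by_cases hρ : shortTermPower δ₁ δ₂ x₀ y₀ (X ω) (Y ω) ≤ ρ <;> simp [hD, hρ]
  · simp [hD, shortTermPower_of_not_le hD]

end ShortTermPower

theorem stmt_6_general {Ωsp : Type*} [MeasurableSpace Ωsp] (μ : Measure Ωsp)
    (X Y : Ωsp → ℝ) (hX : Measurable X) (hY : Measurable Y)
    (δ1 δ2 x0 y0 Pavg ρ : ℝ)
    (hx0 : 0 < x0) (hy0 : 0 < y0) (hρ : 0 < ρ)
    (PRst : ℝ → ℝ → ℝ)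
    (hPRst : ∀ x y, PRst x y =
      if x0 ≤ x ∧ y0 ≤ y then max (δ1 / y) (δ2 / x) else 0)
    (hρsol : ∫⁻ ω, ENNReal.ofReal
        (if PRst (X ω) (Y ω) ≤ ρ then PRst (X ω) (Y ω) else 0) ∂μ =
      ENNReal.ofReal Pavg)
    (Pstar : ℝ → ℝ → ℝ)
    (hPstar : ∀ x y, Pstar x y = if PRst x y ≤ ρ then PRst x y else 0) :
    (∫⁻ ω, ENNReal.ofReal (Pstar (X ω) (Y ω)) ∂μ ≤ ENNReal.ofReal Pavg) ∧
    (∀ P : ℝ → ℝ → ℝ, Measurable (Function.uncurry P) → (∀ x y, 0 ≤ P x y) →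
      (∫⁻ ω, ENNReal.ofReal (P (X ω) (Y ω)) ∂μ) ≤ ENNReal.ofReal Pavg →
      μ {ω | (x0 ≤ X ω ∧ y0 ≤ Y ω) ∧
          (P (X ω) (Y ω) * Y ω < δ1 ∨ P (X ω) (Y ω) * X ω < δ2)} ≥
      μ {ω | (x0 ≤ X ω ∧ y0 ≤ Y ω) ∧
          (Pstar (X ω) (Y ω) * Y ω < δ1 ∨ Pstar (X ω) (Y ω) * X ω < δ2)}) := by
  obtain rfl : PRst = shortTermPower δ1 δ2 x0 y0 := funext fun x => funext (hPRst x)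
  refine ⟨le_of_eq (by simp only [hPstar, hρsol]), fun P hP _ hPbudget => ?_⟩
  set D := {ω | x0 ≤ X ω ∧ y0 ≤ Y ω}
  set f : Ωsp → ℝ≥0∞ := fun ω => ENNReal.ofReal (shortTermPower δ1 δ2 x0 y0 (X ω) (Y ω))
  set A := {ω | shortTermPower δ1 δ2 x0 y0 (X ω) (Y ω) ≤ P (X ω) (Y ω)} ∩ D
  set B := {ω | shortTermPower δ1 δ2 x0 y0 (X ω) (Y ω) ≤ ρ} ∩ D
  have hf : Measurable fun ω => shortTermPower δ1 δ2 x0 y0 (X ω) (Y ω) :=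
    measurable_shortTermPower.comp (hX.prodMk hY)
  have hA : MeasurableSet A :=
    (measurableSet_le hf (hP.comp (hX.prodMk hY))).inter (measurableSet_le_and_le hX hY)
  have hB : MeasurableSet B := (measurableSet_le hf measurable_const).inter
    (measurableSet_le_and_le hX hY)
  have hBf : ∫⁻ ω in B, f ω ∂μ = ENNReal.ofReal Pavg :=
    (lintegral_truncated_shortTermPower μ hX hY ρ).symm.trans hρsol
  have hbudget : ∫⁻ ω in A, f ω ∂μ ≤ ∫⁻ ω in B, f ω ∂μ :=
    calc ∫⁻ ω in A, f ω ∂μ ≤ ∫⁻ ω in A, ENNReal.ofReal (P (X ω) (Y ω)) ∂μ :=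
          setLIntegral_mono' hA fun ω hω => ENNReal.ofReal_le_ofReal hω.1
      _ ≤ ∫⁻ ω, ENNReal.ofReal (P (X ω) (Y ω)) ∂μ := setLIntegral_le_lintegral _ _
      _ ≤ ∫⁻ ω in B, f ω ∂μ := hBf ▸ hPbudget
  have hmoved : μ (A \ B) ≤ μ (B \ A) :=
    measure_sdiff_le_measure_sdiff_of_setLIntegral_le (ENNReal.ofReal_ne_zero_iff.mpr hρ)
      ENNReal.ofReal_ne_top hA hB (fun ω hω => ENNReal.ofReal_le_ofReal hω.1)
      (fun ω hω => ENNReal.ofReal_le_ofReal (not_le.mp fun h => hω.2 ⟨h, hω.1.2⟩).le)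
      hbudget (hBf ▸ ENNReal.ofReal_ne_top)
  have hPstar_le : ∀ x y, shortTermPower δ1 δ2 x0 y0 x y ≤ Pstar x y ↔
      shortTermPower δ1 δ2 x0 y0 x y ≤ ρ := fun x y => hPstar x y ▸ le_ite_le_self_iff hρ.le
  rw [setOf_outage_eq_sdiff hx0 hy0, setOf_outage_eq_sdiff hx0 hy0]
  simp only [hPstar_le]
  convert measure_sdiff_le_measure_sdiff_of_subset hA hB inter_subset_right inter_subset_right
    hmoved using 2 <;> exact sdiff_inter_self_eq_sdiff.symm

/-- `X, Y` independent exponentials with means `Ω_X, Ω_Y`; `P_{R,st}(x,y) =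
max (δ1/y) (δ2/x)` on `D_R = {x ≥ x0, y ≥ y0}` and `0` otherwise; `ρ > 0` chosen so the
truncated allocation has average power exactly `P_avg ≤ E[P_{R,st}(X,Y)]`; `P*` is the
truncation of `P_{R,st}` at level `ρ`. Then `E[P*(X,Y)] ≤ P_avg`, and every measurable
nonnegative relay allocation `P` with `E[P(X,Y)] ≤ P_avg` has broadcast-phase outage
probability at least that of `P*`. -/
theorem stmt_6 {Ωsp : Type*} [MeasurableSpace Ωsp] (μ : Measure Ωsp)
    [IsProbabilityMeasure μ]
    (X Y : Ωsp → ℝ) (hX : Measurable X) (hY : Measurable Y)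
    (hindep : IndepFun X Y μ)
    (ΩX ΩY δ1 δ2 x0 y0 Pavg ρ : ℝ)
    (hΩX : 0 < ΩX) (hΩY : 0 < ΩY) (hδ1 : 0 < δ1) (hδ2 : 0 < δ2)
    (hx0 : 0 < x0) (hy0 : 0 < y0) (hPavg : 0 < Pavg) (hρ : 0 < ρ)
    (hXdist : Measure.map X μ = expMeasure (1 / ΩX))
    (hYdist : Measure.map Y μ = expMeasure (1 / ΩY))
    (PRst : ℝ → ℝ → ℝ)
    (hPRst : ∀ x y, PRst x y =
      if x0 ≤ x ∧ y0 ≤ y then max (δ1 / y) (δ2 / x) else 0)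
    (hPavgle : ENNReal.ofReal Pavg ≤ ∫⁻ ω, ENNReal.ofReal (PRst (X ω) (Y ω)) ∂μ)
    (hρsol : ∫⁻ ω, ENNReal.ofReal
        (if PRst (X ω) (Y ω) ≤ ρ then PRst (X ω) (Y ω) else 0) ∂μ =
      ENNReal.ofReal Pavg)
    (Pstar : ℝ → ℝ → ℝ)
    (hPstar : ∀ x y, Pstar x y = if PRst x y ≤ ρ then PRst x y else 0) :
    (∫⁻ ω, ENNReal.ofReal (Pstar (X ω) (Y ω)) ∂μ ≤ ENNReal.ofReal Pavg) ∧
    (∀ P : ℝ → ℝ → ℝ, Measurable (Function.uncurry P) → (∀ x y, 0 ≤ P x y) →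
      (∫⁻ ω, ENNReal.ofReal (P (X ω) (Y ω)) ∂μ) ≤ ENNReal.ofReal Pavg →
      μ {ω | (x0 ≤ X ω ∧ y0 ≤ Y ω) ∧
          (P (X ω) (Y ω) * Y ω < δ1 ∨ P (X ω) (Y ω) * X ω < δ2)} ≥
      μ {ω | (x0 ≤ X ω ∧ y0 ≤ Y ω) ∧
          (Pstar (X ω) (Y ω) * Y ω < δ1 ∨ Pstar (X ω) (Y ω) * X ω < δ2)}) :=
  stmt_6_general μ X Y hX hY δ1 δ2 x0 y0 Pavg ρ hx0 hy0 hρ PRst hPRst hρsol Pstar hPstar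
end

section
/- Let X and Y be independent exponentially distributed random variables with means Ω_X > 0 and Ω_Y > 0, let δ1, δ2, x0, y0, ρ > 0 with δ2·y0 ≤ δ1·x0 and ρ ≥ δ2/x0, and set λ2 = max{y0, δ1/ρ}. Define P*(x,y) = max{δ1/y, δ2/x} if x ≥ x0, y ≥ y0, and max{δ1/y, δ2/x} ≤ ρ, and P*(x,y) = 0 otherwise. Then the average relay output power equals E[P*(X,Y)] = (δ1/Ω_Y)·E1(λ2/Ω_Y)·e^{−x0/Ω_X} − (δ1/Ω_Y)·E1(δ1·x0/(δ2·Ω_Y))·e^{−x0/Ω_X} + (δ1/Ω_Y)·E1((1/Ω_X + δ1/(δ2·Ω_Y))·x0) + (δ2/Ω_X)·E1((1/Ω_X + δ1/(δ2·Ω_Y))·x0), where E1(z) = ∫_z^{∞}(e^{−t}/t) dt. -/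
/-!
Once `x ≥ x0`, the constraint `max (δ1/y) (δ2/x) ≤ ρ` reduces to `y ≥ δ1/ρ`, so `P*` equals
`max (δ1/y) (δ2/x)` on the quadrant `[x0, ∞) × [λ2, ∞)` and vanishes elsewhere. By independence
the expectation is an iterated integral against the two exponential densities. For fixed `x` the
maximum switches from `δ1/y` to `δ2/x` at `y = δ1 x/δ2 ≥ λ2`, which gives a difference of two
`E1` values plus an exponential tail. The `x`-integral of `e^{-x/ΩX} E1(kx)` is then done by parts,
using `d/dx E1(kx) = -e^{-kx}/x`.
-/

open MeasureTheory ProbabilityTheory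

open Set Filter Topology Real

lemma integrableOn_mul_exp_neg_mul {a : ℝ} (ha : 0 < a) (s : ℝ) :
    IntegrableOn (fun x => a * exp (-(a * x))) (Ioi s) := by
  simp_rw [← neg_mul]
  exact (exp_neg_integrableOn_Ioi s ha).const_mul a

lemma integral_mul_exp_neg_mul_Ioi {a : ℝ} (ha : 0 < a) (s : ℝ) :
    ∫ x in Ioi s, a * exp (-(a * x)) = exp (-(a * s)) := by
  simp_rw [← neg_mul]
  rw [integral_const_mul, integral_exp_mul_Ioi (neg_neg_of_pos ha)]
  field_simp

lemma integrableOn_exp_neg_mul_div {c s : ℝ} (hc : 0 < c) (hs : 0 < s) :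
    IntegrableOn (fun t => exp (-(c * t)) / t) (Ioi s) := by
  refine ((exp_neg_integrableOn_Ioi s hc).const_mul s⁻¹).mono'
    (by fun_prop : Measurable fun t => exp (-(c * t)) / t).aestronglyMeasurable ?_
  filter_upwards [ae_restrict_mem measurableSet_Ioi] with t (ht : s < t)
  have ht0 : 0 < t := hs.trans ht
  rw [norm_of_nonneg (by positivity), div_eq_inv_mul, neg_mul]
  gcongr

lemma integrableOn_exp_neg_div {s : ℝ} (hs : 0 < s) :
    IntegrableOn (fun t => exp (-t) / t) (Ioi s) := by
  simpa using integrableOn_exp_neg_mul_div one_pos hs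

lemma expInt_nonneg {z : ℝ} (hz : 0 < z) : 0 ≤ expInt z :=
  setIntegral_nonneg measurableSet_Ioi fun t ht => by
    have : 0 < t := hz.trans ht
    positivity

lemma integral_exp_neg_mul_div_Ioi {c s : ℝ} (hc : 0 < c) (hs : 0 < s) :
    ∫ t in Ioi s, exp (-(c * t)) / t = expInt (c * s) := by
  calc ∫ t in Ioi s, exp (-(c * t)) / t
      = c • ∫ t in Ioi s, exp (-(c * t)) / (c * t) := by
        rw [smul_eq_mul, ← integral_const_mul]
        refine setIntegral_congr_fun measurableSet_Ioi fun t ht => ?_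
        have : 0 < t := hs.trans ht
        field_simp
    _ = expInt (c * s) := integral_comp_mul_left_Ioi' (fun u => exp (-u) / u) s hc

lemma integral_Ioc_exp_neg_mul_div {c u v : ℝ} (hc : 0 < c) (hu : 0 < u) (huv : u ≤ v) :
    ∫ t in Ioc u v, exp (-(c * t)) / t = expInt (c * u) - expInt (c * v) := by
  rw [← integral_exp_neg_mul_div_Ioi hc hu, ← integral_exp_neg_mul_div_Ioi hc (hu.trans_le huv),
    intervalIntegral.integral_Ioi_sub_Ioi (integrableOn_exp_neg_mul_div hc hu) huv,
    intervalIntegral.integral_of_le huv]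

lemma expInt_eq_sub_intervalIntegral {z : ℝ} (hz : 0 < z) :
    expInt z = expInt 1 - ∫ t in (1 : ℝ)..z, exp (-t) / t := by
  rw [← intervalIntegral.integral_Ioi_sub_Ioi' (integrableOn_exp_neg_div one_pos)
    (integrableOn_exp_neg_div hz), expInt, expInt, sub_sub_cancel]

lemma continuousOn_exp_neg_div : ContinuousOn (fun t => exp (-t) / t) (Ioi 0) :=
  fun _ ht => ((continuous_exp.comp continuous_neg).continuousAt.div continuousAt_id
    (ne_of_gt ht)).continuousWithinAt

lemma hasDerivAt_expInt {z : ℝ} (hz : 0 < z) :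
    HasDerivAt expInt (-(exp (-z) / z)) z := by
  have hint : HasDerivAt (fun x => ∫ t in (1 : ℝ)..x, exp (-t) / t) (exp (-z) / z) z :=
    intervalIntegral.integral_hasDerivAt_right
      (continuousOn_exp_neg_div.mono fun _ ht =>
        (lt_min one_pos hz).trans_le ht.1).intervalIntegrable
      (continuousOn_exp_neg_div.stronglyMeasurableAtFilter isOpen_Ioi z hz)
      (continuousOn_exp_neg_div.continuousAt (Ioi_mem_nhds hz))
  refine (hint.const_sub (expInt 1)).congr_of_eventuallyEq ?_
  filter_upwards [Ioi_mem_nhds hz] with x hx using expInt_eq_sub_intervalIntegral hx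

lemma tendsto_expInt_atTop : Tendsto expInt atTop (𝓝 0) := by
  have hlim := (intervalIntegral_tendsto_integral_Ioi 1 (integrableOn_exp_neg_div one_pos)
    tendsto_id).const_sub (expInt 1)
  rw [← expInt, sub_self] at hlim
  refine hlim.congr' ?_
  filter_upwards [eventually_gt_atTop 0] with x hx using (expInt_eq_sub_intervalIntegral hx).symm

section IntegrationByParts

variable {a k : ℝ}

lemma hasDerivAt_neg_exp_neg_mul_mul_expInt (hk : 0 < k) {x : ℝ} (hx : 0 < x) :
    HasDerivAt (fun x => -(exp (-(a * x)) * expInt (k * x)))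
      (a * exp (-(a * x)) * expInt (k * x) + exp (-((a + k) * x)) / x) x := by
  have hexp : HasDerivAt (fun x => exp (-(a * x))) (exp (-(a * x)) * -a) x :=
    ((hasDerivAt_id x).const_mul a).neg.exp.congr_deriv (by simp)
  have hE : HasDerivAt (fun x => expInt (k * x)) (-(exp (-(k * x)) / (k * x)) * k) x :=
    (hasDerivAt_expInt (by positivity)).comp x ((hasDerivAt_id x).const_mul k |>.congr_deriv
      (mul_one k))
  refine (hexp.mul hE).neg.congr_deriv ?_
  rw [show -((a + k) * x) = -(a * x) + -(k * x) by ring, exp_add]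
  field_simp
  ring

lemma tendsto_exp_neg_mul_mul_expInt (ha : 0 < a) (hk : 0 < k) :
    Tendsto (fun x => exp (-(a * x)) * expInt (k * x)) atTop (𝓝 0) := by
  have hexp : Tendsto (fun x => exp (-(a * x))) atTop (𝓝 0) :=
    tendsto_exp_atBot.comp (tendsto_neg_atTop_atBot.comp (tendsto_id.const_mul_atTop ha))
  simpa using hexp.mul (tendsto_expInt_atTop.comp (tendsto_id.const_mul_atTop hk))

lemma exp_neg_mul_mul_expInt_add_nonneg (ha : 0 < a) (hk : 0 < k) {x : ℝ} (hx : 0 < x) :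
    0 ≤ a * exp (-(a * x)) * expInt (k * x) + exp (-((a + k) * x)) / x := by
  have := expInt_nonneg (mul_pos hk hx)
  positivity

lemma integrableOn_exp_neg_mul_mul_expInt_add (ha : 0 < a) (hk : 0 < k) {s : ℝ} (hs : 0 < s) :
    IntegrableOn (fun x => a * exp (-(a * x)) * expInt (k * x) + exp (-((a + k) * x)) / x)
      (Ioi s) :=
  integrableOn_Ioi_deriv_of_nonneg'
    (fun _ hx => hasDerivAt_neg_exp_neg_mul_mul_expInt hk (hs.trans_le hx))
    (fun _ hx => exp_neg_mul_mul_expInt_add_nonneg ha hk (hs.trans hx))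
    (tendsto_exp_neg_mul_mul_expInt ha hk).neg

lemma integral_exp_neg_mul_mul_expInt_add (ha : 0 < a) (hk : 0 < k) {s : ℝ} (hs : 0 < s) :
    ∫ x in Ioi s, (a * exp (-(a * x)) * expInt (k * x) + exp (-((a + k) * x)) / x)
      = exp (-(a * s)) * expInt (k * s) := by
  rw [integral_Ioi_of_hasDerivAt_of_nonneg'
    (fun _ hx => hasDerivAt_neg_exp_neg_mul_mul_expInt hk (hs.trans_le hx))
    (fun _ hx => exp_neg_mul_mul_expInt_add_nonneg ha hk (hs.trans hx))
    (tendsto_exp_neg_mul_mul_expInt ha hk).neg]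
  simp

end IntegrationByParts

lemma integral_Ioi_mul_exp_neg_mul_expInt_comb {a k s : ℝ} (ha : 0 < a) (hk : 0 < k)
    (hs : 0 < s) (C D β : ℝ) :
    ∫ x in Ioi s, a * exp (-(a * x)) * (C - D * expInt (k * x) + β / x * exp (-(k * x)))
      = C * exp (-(a * s)) - D * exp (-(a * s)) * expInt (k * s)
        + (D + a * β) * expInt ((a + k) * s) := by
  have hexp := integrableOn_mul_exp_neg_mul ha s
  have hdiv := integrableOn_exp_neg_mul_div (add_pos ha hk) hs
  have hibp := integrableOn_exp_neg_mul_mul_expInt_add ha hk hs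
  -- the middle summand is the derivative from `hasDerivAt_neg_exp_neg_mul_mul_expInt`
  calc ∫ x in Ioi s, a * exp (-(a * x)) * (C - D * expInt (k * x) + β / x * exp (-(k * x)))
      = ∫ x in Ioi s, (C * (a * exp (-(a * x)))
          - D * (a * exp (-(a * x)) * expInt (k * x) + exp (-((a + k) * x)) / x)
          + (D + a * β) * (exp (-((a + k) * x)) / x)) := by
        refine setIntegral_congr_fun measurableSet_Ioi fun x _ => ?_
        rw [show -((a + k) * x) = -(a * x) + -(k * x) by ring, exp_add]
        ring
    _ = C * exp (-(a * s)) - D * exp (-(a * s)) * expInt (k * s)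
          + (D + a * β) * expInt ((a + k) * s) := by
        rw [integral_add ?_ (hdiv.const_mul _),
          integral_sub (hexp.const_mul C) (hibp.const_mul D), integral_const_mul,
          integral_mul_exp_neg_mul_Ioi ha, integral_const_mul,
          integral_exp_neg_mul_mul_expInt_add ha hk hs, integral_const_mul,
          integral_exp_neg_mul_div_Ioi (add_pos ha hk) hs]
        · ring
        · exact (hexp.const_mul C).sub (hibp.const_mul D)

lemma integral_expMeasure {r : ℝ} (hr : 0 < r) (g : ℝ → ℝ) :
    ∫ x, g x ∂expMeasure r = ∫ x in Ioi 0, r * exp (-(r * x)) * g x := by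
  rw [show expMeasure r = volume.withDensity (exponentialPDF r) from rfl,
    integral_withDensity_eq_integral_toReal_smul (f := exponentialPDF r)
      (measurable_exponentialPDFReal r).ennreal_ofReal
      (ae_of_all _ fun _ => ENNReal.ofReal_lt_top), ← integral_Ici_eq_integral_Ioi,
    ← setIntegral_eq_integral_of_forall_compl_eq_zero (s := Ici 0)]
  · refine setIntegral_congr_fun measurableSet_Ici fun x (hx : 0 ≤ x) => ?_
    rw [exponentialPDF_of_nonneg hx, ENNReal.toReal_ofReal (by positivity), smul_eq_mul]
  · intro x hx
    rw [exponentialPDF_of_neg (not_le.mp hx), ENNReal.toReal_zero, zero_smul]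

lemma integral_expMeasure_indicator_Ici {r s : ℝ} (hr : 0 < r) (hs : 0 < s) (g : ℝ → ℝ) :
    ∫ x, (Ici s).indicator g x ∂expMeasure r = ∫ x in Ioi s, r * exp (-(r * x)) * g x := by
  rw [integral_expMeasure hr]
  simp_rw [← indicator_mul_right (Ici s) (fun x => r * exp (-(r * x))) g]
  rw [setIntegral_indicator measurableSet_Ici, inter_eq_self_of_subset_right
    (Ici_subset_Ioi.mpr hs), integral_Ici_eq_integral_Ioi]

lemma integral_comp_prodMk_of_indepFun {Ω α β E : Type*} [MeasurableSpace Ω] [MeasurableSpace α]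
    [MeasurableSpace β] [NormedAddCommGroup E] [NormedSpace ℝ E] {μ : Measure Ω}
    [IsFiniteMeasure μ] {X : Ω → α} {Y : Ω → β} (hX : AEMeasurable X μ) (hY : AEMeasurable Y μ)
    (hXY : IndepFun X Y μ) {g : α × β → E} (hg : Integrable g ((μ.map X).prod (μ.map Y))) :
    ∫ ω, g (X ω, Y ω) ∂μ = ∫ x, ∫ y, g (x, y) ∂μ.map Y ∂μ.map X := by
  have hmap := (indepFun_iff_map_prod_eq_prod_map_map hX hY).mp hXY
  rw [← integral_prod g hg, ← hmap, integral_map (hX.prodMk hY) (hmap ▸ hg.aestronglyMeasurable)]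

lemma integral_Ioi_mul_max_div {b α β lam : ℝ} (hb : 0 < b) (hβ : 0 < β) (hlam : 0 < lam)
    (hle : lam ≤ α / β) :
    ∫ y in Ioi lam, b * exp (-(b * y)) * max (α / y) β
      = α * b * expInt (b * lam) - α * b * expInt (b * (α / β)) + β * exp (-(b * (α / β))) := by
  set c := α / β
  have hlow : EqOn (fun y => b * exp (-(b * y)) * max (α / y) β)
      (fun y => α * b * (exp (-(b * y)) / y)) (Ioc lam c) := fun y hy => by
    have hy0 : 0 < y := hlam.trans hy.1
    dsimp only
    rw [max_eq_left ((le_div_comm₀ hβ hy0).2 hy.2)]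
    field_simp
  have hhigh : EqOn (fun y => b * exp (-(b * y)) * max (α / y) β)
      (fun y => β * (b * exp (-(b * y)))) (Ioi c) := fun y (hy : c < y) => by
    dsimp only
    rw [max_eq_right ((div_lt_comm₀ (hlam.trans_le (hle.trans hy.le)) hβ).2 hy).le]
    ring
  have hint_low := IntegrableOn.congr_fun
    (((integrableOn_exp_neg_mul_div hb hlam).mono_set Ioc_subset_Ioi_self).const_mul (α * b))
    hlow.symm measurableSet_Ioc
  have hint_high := IntegrableOn.congr_fun
    ((integrableOn_mul_exp_neg_mul hb c).const_mul β) hhigh.symm measurableSet_Ioi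
  rw [← Ioc_union_Ioi_eq_Ioi hle, setIntegral_union Ioc_disjoint_Ioi_same measurableSet_Ioi
      hint_low hint_high, setIntegral_congr_fun measurableSet_Ioc hlow,
    setIntegral_congr_fun measurableSet_Ioi hhigh, integral_const_mul,
    integral_Ioc_exp_neg_mul_div hb hlam hle, integral_const_mul, integral_mul_exp_neg_mul_Ioi hb]
  ring

lemma relay_active_iff {δ1 δ2 x0 y0 ρ x y : ℝ} (hδ2 : 0 ≤ δ2) (hx0 : 0 < x0) (hy0 : 0 < y0)
    (hρ : 0 < ρ) (hρx0 : δ2 / x0 ≤ ρ) :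
    (x0 ≤ x ∧ y0 ≤ y ∧ max (δ1 / y) (δ2 / x) ≤ ρ) ↔ (x0 ≤ x ∧ max y0 (δ1 / ρ) ≤ y) := by
  simp only [max_le_iff]
  constructor
  · rintro ⟨hx, hy, hδ1y, -⟩
    exact ⟨hx, hy, (div_le_comm₀ (hy0.trans_le hy) hρ).1 hδ1y⟩
  · rintro ⟨hx, hy, hδ1ρ⟩
    exact ⟨hx, hy, (div_le_comm₀ (hy0.trans_le hy) hρ).2 hδ1ρ,
      (div_le_div_of_nonneg_left hδ2 hx0 hx).trans hρx0⟩

/-- The allocation `P*` rewritten via `relay_active_iff`, with `lam` playing the role of `λ2`. -/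
noncomputable def truncPower (δ1 δ2 x0 lam : ℝ) (p : ℝ × ℝ) : ℝ :=
  if x0 ≤ p.1 ∧ lam ≤ p.2 then max (δ1 / p.2) (δ2 / p.1) else 0

section TruncPower

variable {δ1 δ2 x0 lam : ℝ}

lemma measurable_truncPower : Measurable (truncPower δ1 δ2 x0 lam) :=
  Measurable.ite ((measurableSet_le measurable_const measurable_fst).inter
    (measurableSet_le measurable_const measurable_snd)) (by fun_prop) measurable_const

lemma integrable_truncPower (hδ1 : 0 ≤ δ1) (hδ2 : 0 ≤ δ2) (hx0 : 0 < x0) (hlam : 0 < lam)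
    {ν : Measure (ℝ × ℝ)} [IsFiniteMeasure ν] : Integrable (truncPower δ1 δ2 x0 lam) ν := by
  refine .of_bound measurable_truncPower.aestronglyMeasurable (max (δ1 / lam) (δ2 / x0))
    (ae_of_all _ fun p => ?_)
  unfold truncPower
  split_ifs with h
  · have h1 : 0 < p.1 := hx0.trans_le h.1
    have h2 : 0 < p.2 := hlam.trans_le h.2
    rw [norm_of_nonneg (by positivity)]
    exact max_le_max (div_le_div_of_nonneg_left hδ1 hlam h.2)
      (div_le_div_of_nonneg_left hδ2 hx0 h.1)
  · rw [norm_zero]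
    positivity

lemma integral_truncPower_expMeasure_snd {b : ℝ} (hb : 0 < b) (hδ1 : 0 < δ1) (hδ2 : 0 < δ2)
    (hx0 : 0 < x0) (hlam : 0 < lam) (hle : lam ≤ δ1 * x0 / δ2) (x : ℝ) :
    ∫ y, truncPower δ1 δ2 x0 lam (x, y) ∂expMeasure b
      = (Ici x0).indicator (fun x => δ1 * b * expInt (b * lam)
          - δ1 * b * expInt (b * δ1 / δ2 * x) + δ2 / x * exp (-(b * δ1 / δ2 * x))) x := by
  by_cases hx : x0 ≤ x
  · have hx' : 0 < x := hx0.trans_le hx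
    have hslice : (fun y => truncPower δ1 δ2 x0 lam (x, y))
        = (Ici lam).indicator (fun y => max (δ1 / y) (δ2 / x)) := by
      ext y
      simp [truncPower, indicator, hx]
    have hbreak : b * (δ1 / (δ2 / x)) = b * δ1 / δ2 * x := by field_simp
    rw [hslice, integral_expMeasure_indicator_Ici hb hlam, integral_Ioi_mul_max_div hb
        (by positivity) hlam (by rw [div_div_eq_mul_div]; exact hle.trans (by gcongr)),
      indicator_of_mem (mem_Ici.mpr hx), hbreak]
  · simp [truncPower, hx]

lemma integral_integral_truncPower_expMeasure {a b : ℝ} (ha : 0 < a) (hb : 0 < b)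
    (hδ1 : 0 < δ1) (hδ2 : 0 < δ2) (hx0 : 0 < x0) (hlam : 0 < lam) (hle : lam ≤ δ1 * x0 / δ2) :
    ∫ x, ∫ y, truncPower δ1 δ2 x0 lam (x, y) ∂expMeasure b ∂expMeasure a
      = δ1 * b * expInt (b * lam) * exp (-(a * x0))
        - δ1 * b * exp (-(a * x0)) * expInt (b * δ1 / δ2 * x0)
        + (δ1 * b + a * δ2) * expInt ((a + b * δ1 / δ2) * x0) := by
  simp_rw [integral_truncPower_expMeasure_snd hb hδ1 hδ2 hx0 hlam hle]
  rw [integral_expMeasure_indicator_Ici ha hx0,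
    integral_Ioi_mul_exp_neg_mul_expInt_comb ha (by positivity) hx0]

end TruncPower

/-- average relay output power of the optimal truncated allocation in the
regime `δ2 y0 ≤ δ1 x0`, `ρ ≥ δ2/x0`, with `lam2 = max y0 (δ1/ρ)`. -/
theorem stmt_8 {Ωsp : Type*} [MeasurableSpace Ωsp] (μ : Measure Ωsp)
    [IsProbabilityMeasure μ]
    (X Y : Ωsp → ℝ) (hX : Measurable X) (hY : Measurable Y)
    (hindep : IndepFun X Y μ)
    (ΩX ΩY δ1 δ2 x0 y0 ρ : ℝ)
    (hΩX : 0 < ΩX) (hΩY : 0 < ΩY) (hδ1 : 0 < δ1) (hδ2 : 0 < δ2)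
    (hx0 : 0 < x0) (hy0 : 0 < y0) (hρ : 0 < ρ)
    (hreg : δ2 * y0 ≤ δ1 * x0) (hρge : δ2 / x0 ≤ ρ)
    (hXdist : Measure.map X μ = expMeasure (1 / ΩX))
    (hYdist : Measure.map Y μ = expMeasure (1 / ΩY))
    (lam2 : ℝ) (hlam2 : lam2 = max y0 (δ1 / ρ))
    (Pstar : ℝ → ℝ → ℝ)
    (hPstar : ∀ x y, Pstar x y =
      if x0 ≤ x ∧ y0 ≤ y ∧ max (δ1 / y) (δ2 / x) ≤ ρ
      then max (δ1 / y) (δ2 / x) else 0) :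
    ∫ ω, Pstar (X ω) (Y ω) ∂μ =
      (δ1 / ΩY) * expInt (lam2 / ΩY) * Real.exp (-x0 / ΩX)
      - (δ1 / ΩY) * expInt (δ1 * x0 / (δ2 * ΩY)) * Real.exp (-x0 / ΩX)
      + (δ1 / ΩY) * expInt ((1 / ΩX + δ1 / (δ2 * ΩY)) * x0)
      + (δ2 / ΩX) * expInt ((1 / ΩX + δ1 / (δ2 * ΩY)) * x0) := by
  have hlam2_pos : 0 < lam2 := hlam2 ▸ hy0.trans_le (le_max_left _ _)
  have hlam2_le : lam2 ≤ δ1 * x0 / δ2 := by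
    refine hlam2 ▸ max_le ((le_div_iff₀ hδ2).2 (by linarith)) ?_
    calc δ1 / ρ ≤ δ1 / (δ2 / x0) := div_le_div_of_nonneg_left hδ1.le (by positivity) hρge
      _ = δ1 * x0 / δ2 := div_div_eq_mul_div _ _ _
  have hP : ∀ ω, Pstar (X ω) (Y ω) = truncPower δ1 δ2 x0 lam2 (X ω, Y ω) := fun ω => by
    rw [hPstar, truncPower, hlam2]
    exact if_congr (relay_active_iff hδ2.le hx0 hy0 hρ hρge) rfl rfl
  simp_rw [hP]
  rw [integral_comp_prodMk_of_indepFun hX.aemeasurable hY.aemeasurable hindep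
      (integrable_truncPower hδ1.le hδ2.le hx0 hlam2_pos), hXdist, hYdist,
    integral_integral_truncPower_expMeasure (by positivity) (by positivity) hδ1 hδ2 hx0
      hlam2_pos hlam2_le]
  rw [show 1 / ΩY * lam2 = lam2 / ΩY by ring, show -(1 / ΩX * x0) = -x0 / ΩX by ring,
    show 1 / ΩY * δ1 / δ2 * x0 = δ1 * x0 / (δ2 * ΩY) by field_simp,
    show 1 / ΩY * δ1 / δ2 = δ1 / (δ2 * ΩY) by field_simp]
  ring
end

section
/- Let X and Y be independent exponentially distributed random variables with means Ω_X > 0 and Ω_Y > 0, let δ1, δ2, x0, y0, ρ > 0 with δ2·y0 > δ1·x0 and ρ ≥ δ1/y0, and set λ1 = max{x0, δ2/ρ}. Define P*(x,y) = max{δ1/y, δ2/x} if x ≥ x0, y ≥ y0, and max{δ1/y, δ2/x} ≤ ρ, and P*(x,y) = 0 otherwise. Then the average relay output power equals E[P*(X,Y)] = (δ2/Ω_X)·E1(λ1/Ω_X)·e^{−y0/Ω_Y} − (δ2/Ω_X)·E1(δ2·y0/(δ1·Ω_X))·e^{−y0/Ω_Y} + (δ2/Ω_X)·E1((1/Ω_Y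 + δ2/(δ1·Ω_X))·y0) + (δ1/Ω_Y)·E1((1/Ω_Y + δ2/(δ1·Ω_X))·y0), where E1(z) = ∫_z^{∞}(e^{−t}/t) dt. -/
/-!
For `y ≥ y0` the constraint `δ1 / y ≤ ρ` is automatic (as `ρ ≥ δ1 / y0`), so `P*(·, y)` vanishes
below `λ1 = max x0 (δ2 / ρ)`, equals `δ2 / x` up to `x = δ2 y / δ1` (which is at least `λ1` by
the regime conditions) and `δ1 / y` after it. Averaging in `x` against the law of `X` therefore gives
`E1`-terms in `y`, and averaging those against the law of `Y` is elementary except for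
`∫ e^{-by} E1(cy) dy`, which Fubini evaluates after writing `E1` as an integral.
-/

open MeasureTheory ProbabilityTheory

open Set Real

section ExponentialIntegral

variable {c z w : ℝ}

lemma integrableOn_exp_neg_mul_Ioi (hc : 0 < c) (z : ℝ) :
    IntegrableOn (fun t => exp (-(c * t))) (Ioi z) := by
  simpa only [neg_mul] using exp_neg_integrableOn_Ioi z hc

lemma setIntegral_mul_exp_neg_mul_Ioi (hc : 0 < c) (z : ℝ) :
    ∫ t in Ioi z, c * exp (-(c * t)) = exp (-(c * z)) := by
  rw [integral_const_mul, integral_comp_mul_left_Ioi (fun t => exp (-t)) z hc,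
    integral_exp_neg_Ioi, smul_eq_mul, ← mul_assoc, mul_inv_cancel₀ hc.ne', one_mul]

lemma setIntegral_mul_exp_neg_mul_Ioc (hc : 0 < c) (hzw : z ≤ w) :
    ∫ t in Ioc z w, c * exp (-(c * t)) = exp (-(c * z)) - exp (-(c * w)) := by
  have hunion := setIntegral_union (Ioc_disjoint_Ioi le_rfl) measurableSet_Ioi
    (((integrableOn_exp_neg_mul_Ioi hc z).mono_set Ioc_subset_Ioi_self).const_mul c)
    ((integrableOn_exp_neg_mul_Ioi hc w).const_mul c)
  rw [Ioc_union_Ioi_eq_Ioi hzw, setIntegral_mul_exp_neg_mul_Ioi hc,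
    setIntegral_mul_exp_neg_mul_Ioi hc] at hunion
  linarith

lemma integrableOn_exp_neg_mul_div_Ioi (hc : 0 < c) (hz : 0 < z) :
    IntegrableOn (fun t => exp (-(c * t)) / t) (Ioi z) := by
  refine ((integrableOn_exp_neg_mul_Ioi hc z).div_const z).mono'
    (by fun_prop : Measurable fun t => exp (-(c * t)) / t).aestronglyMeasurable ?_
  filter_upwards [ae_restrict_mem measurableSet_Ioi] with t (ht : z < t)
  rw [norm_div, norm_of_nonneg (exp_pos _).le, norm_of_nonneg (hz.trans ht).le]
  gcongr

lemma setIntegral_exp_neg_mul_div_Ioi (hc : 0 < c) (z : ℝ) :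
    ∫ t in Ioi z, exp (-(c * t)) / t = expInt (c * z) := by
  have h : ∀ t, exp (-(c * t)) / t = c * (exp (-(c * t)) / (c * t)) := fun t => by
    rcases eq_or_ne t 0 with rfl | ht
    · simp
    · field_simp
  simp_rw [h]
  rw [integral_const_mul, integral_comp_mul_left_Ioi (fun t => exp (-t) / t) z hc, smul_eq_mul,
    ← mul_assoc, mul_inv_cancel₀ hc.ne', one_mul, expInt]

lemma setIntegral_exp_neg_mul_div_Ioc (hc : 0 < c) (hz : 0 < z) (hzw : z ≤ w) :
    ∫ t in Ioc z w, exp (-(c * t)) / t = expInt (c * z) - expInt (c * w) := by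
  have hunion := setIntegral_union (Ioc_disjoint_Ioi le_rfl) measurableSet_Ioi
    ((integrableOn_exp_neg_mul_div_Ioi hc hz).mono_set Ioc_subset_Ioi_self)
    (integrableOn_exp_neg_mul_div_Ioi hc (hz.trans_le hzw))
  rw [Ioc_union_Ioi_eq_Ioi hzw, setIntegral_exp_neg_mul_div_Ioi hc,
    setIntegral_exp_neg_mul_div_Ioi hc] at hunion
  linarith

end ExponentialIntegral

section ExpIntKernel

variable {b c y0 : ℝ}

/-- Integrating out `s` gives `b e^{-by} E1(cy)`, integrating out `y` gives elementary terms: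
this is how Fubini evaluates `∫ b e^{-by} E1(cy) dy`. -/
noncomputable def expIntKernel (b c y s : ℝ) : ℝ :=
  if y ≤ s then b * exp (-(b * y)) * (exp (-(c * s)) / s) else 0

lemma integrable_uncurry_expIntKernel (hb : 0 < b) (hc : 0 < c) (hy0 : 0 < y0) :
    Integrable (Function.uncurry (expIntKernel b c))
      ((volume.restrict (Ioi y0)).prod (volume.restrict (Ioi y0))) := by
  refine (((integrableOn_exp_neg_mul_Ioi hb y0).const_mul b).mul_prod
    (integrableOn_exp_neg_mul_div_Ioi hc hy0)).mono' ?_ ?_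
  · exact (Measurable.ite (measurableSet_le measurable_fst measurable_snd) (by fun_prop)
      measurable_const).aestronglyMeasurable
  · rw [Measure.prod_restrict]
    filter_upwards [ae_restrict_mem (measurableSet_Ioi.prod measurableSet_Ioi)]
      with ⟨y, s⟩ ⟨_, hs⟩
    have hs0 : 0 < s := hy0.trans hs
    simp only [Function.uncurry_apply_pair, expIntKernel]
    split_ifs
    · rw [norm_of_nonneg (by positivity)]
    · rw [norm_zero]
      positivity

lemma setIntegral_expIntKernel_right (hc : 0 < c) {y : ℝ} (hy : y0 < y) :
    ∫ s in Ioi y0, expIntKernel b c y s = b * exp (-(b * y)) * expInt (c * y) := by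
  have h : expIntKernel b c y =
      (Ici y).indicator fun s => b * exp (-(b * y)) * (exp (-(c * s)) / s) := by
    ext s
    simp only [expIntKernel, indicator_apply, mem_Ici]
  rw [h, setIntegral_indicator measurableSet_Ici, inter_eq_right.mpr (Ici_subset_Ioi.mpr hy),
    integral_Ici_eq_integral_Ioi, integral_const_mul, setIntegral_exp_neg_mul_div_Ioi hc]

lemma setIntegral_expIntKernel_left (hb : 0 < b) {s : ℝ} (hs : y0 < s) :
    ∫ y in Ioi y0, expIntKernel b c y s =
      exp (-(b * y0)) * (exp (-(c * s)) / s) - exp (-((b + c) * s)) / s := by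
  have h : (fun y => expIntKernel b c y s) =
      (Iic s).indicator fun y => exp (-(c * s)) / s * (b * exp (-(b * y))) := by
    ext y
    simp only [expIntKernel, indicator_apply, mem_Iic, mul_comm]
  rw [h, setIntegral_indicator measurableSet_Iic, Ioi_inter_Iic, integral_const_mul,
    setIntegral_mul_exp_neg_mul_Ioc hb hs.le, add_mul, neg_add, exp_add]
  ring

lemma integrableOn_mul_exp_neg_mul_expInt (hb : 0 < b) (hc : 0 < c) (hy0 : 0 < y0) :
    IntegrableOn (fun y => b * exp (-(b * y)) * expInt (c * y)) (Ioi y0) := by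
  refine (integrable_uncurry_expIntKernel hb hc hy0).integral_prod_left.congr ?_
  filter_upwards [ae_restrict_mem measurableSet_Ioi] with y hy
  exact setIntegral_expIntKernel_right hc hy

lemma setIntegral_mul_exp_neg_mul_expInt (hb : 0 < b) (hc : 0 < c) (hy0 : 0 < y0) :
    ∫ y in Ioi y0, b * exp (-(b * y)) * expInt (c * y) =
      exp (-(b * y0)) * expInt (c * y0) - expInt ((b + c) * y0) := by
  have hswap := integral_integral_swap (integrable_uncurry_expIntKernel hb hc hy0)
  rw [setIntegral_congr_fun measurableSet_Ioi fun y hy => setIntegral_expIntKernel_right hc hy,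
    setIntegral_congr_fun measurableSet_Ioi fun s hs => setIntegral_expIntKernel_left hb hs,
    integral_sub ((integrableOn_exp_neg_mul_div_Ioi hc hy0).const_mul _)
      (integrableOn_exp_neg_mul_div_Ioi (add_pos hb hc) hy0),
    integral_const_mul, setIntegral_exp_neg_mul_div_Ioi hc,
    setIntegral_exp_neg_mul_div_Ioi (add_pos hb hc)] at hswap
  exact hswap

end ExpIntKernel

lemma setIntegral_mul_exp_neg_mul_max_div {a A B L : ℝ} (ha : 0 < a) (hA : 0 < A) (hL : 0 < L)
    (hLB : L ≤ B / A) :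
    ∫ x in Ioi L, a * exp (-(a * x)) * max A (B / x) =
      a * B * (expInt (a * L) - expInt (a * (B / A))) + A * exp (-(a * (B / A))) := by
  have below : ∀ x ∈ Ioc L (B / A),
      a * exp (-(a * x)) * max A (B / x) = a * B * (exp (-(a * x)) / x) := by
    rintro x ⟨hLx, hxB⟩
    have hx : 0 < x := hL.trans hLx
    rw [max_eq_right ((le_div_iff₀ hx).2 (by rwa [mul_comm, ← le_div_iff₀ hA]))]
    ring
  have above : ∀ x ∈ Ioi (B / A),
      a * exp (-(a * x)) * max A (B / x) = A * (a * exp (-(a * x))) := by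
    intro x (hBx : B / A < x)
    have hx : 0 < x := (hL.trans_le hLB).trans hBx
    rw [max_eq_left ((div_le_iff₀ hx).2 (by rw [mul_comm]; exact ((div_lt_iff₀ hA).1 hBx).le))]
    ring
  have hbelow : IntegrableOn (fun x => a * exp (-(a * x)) * max A (B / x)) (Ioc L (B / A)) :=
    IntegrableOn.congr_fun
      (((integrableOn_exp_neg_mul_div_Ioi ha hL).mono_set Ioc_subset_Ioi_self).const_mul _)
      (fun x hx => (below x hx).symm) measurableSet_Ioc
  have habove : IntegrableOn (fun x => a * exp (-(a * x)) * max A (B / x)) (Ioi (B / A)) :=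
    IntegrableOn.congr_fun (((integrableOn_exp_neg_mul_Ioi ha _).const_mul a).const_mul A)
      (fun x hx => (above x hx).symm) measurableSet_Ioi
  rw [← Ioc_union_Ioi_eq_Ioi hLB, setIntegral_union (Ioc_disjoint_Ioi le_rfl) measurableSet_Ioi
      hbelow habove, setIntegral_congr_fun measurableSet_Ioc below,
    setIntegral_congr_fun measurableSet_Ioi above, integral_const_mul, integral_const_mul,
    setIntegral_exp_neg_mul_div_Ioc ha hL hLB, setIntegral_mul_exp_neg_mul_Ioi ha]

lemma integral_indicator_Ici_expMeasure {r L : ℝ} (hr : 0 < r) (hL : 0 ≤ L) (g : ℝ → ℝ) :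
    ∫ x, (Ici L).indicator g x ∂expMeasure r = ∫ x in Ioi L, r * exp (-(r * x)) * g x := by
  rw [integral_indicator measurableSet_Ici, expMeasure, gammaMeasure,
    setIntegral_withDensity_eq_setIntegral_toReal_smul₀' (f := gammaPDF 1 r) _
      (measurable_gammaPDFReal 1 r).ennreal_ofReal.aemeasurable
      (ae_of_all _ fun _ => ENNReal.ofReal_lt_top),
    integral_Ici_eq_integral_Ioi]
  refine setIntegral_congr_fun measurableSet_Ioi fun x (hx : L < x) => ?_
  rw [show gammaPDF 1 r x = exponentialPDF r x from rfl, exponentialPDF_of_nonneg (hL.trans hx.le),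
    ENNReal.toReal_ofReal (by positivity), smul_eq_mul]

lemma ProbabilityTheory.IndepFun.integral_comp_eq_integral_prod_map {Ω α β E : Type*}
    [MeasurableSpace Ω] [MeasurableSpace α] [MeasurableSpace β] [NormedAddCommGroup E]
    [NormedSpace ℝ E] {μ : Measure Ω} {X : Ω → α} {Y : Ω → β} (hXY : IndepFun X Y μ)
    (hX : AEMeasurable X μ) (hY : AEMeasurable Y μ) [SigmaFinite (μ.map X)]
    [SigmaFinite (μ.map Y)] {f : α × β → E}
    (hf : AEStronglyMeasurable f ((μ.map X).prod (μ.map Y))) :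
    ∫ ω, f (X ω, Y ω) ∂μ = ∫ p, f p ∂((μ.map X).prod (μ.map Y)) := by
  rw [← (indepFun_iff_map_prod_eq_prod_map_map' hX hY ‹_› ‹_›).1 hXY] at hf ⊢
  exact (integral_map (hX.prodMk hY) hf).symm

/-- The allocation `P*` with its cutoffs on `x` merged into the single threshold
`lam = max x0 (δ2 / ρ)`. -/
noncomputable def relayPower (δ1 δ2 lam y0 x y : ℝ) : ℝ :=
  if lam ≤ x ∧ y0 ≤ y then max (δ1 / y) (δ2 / x) else 0

section RelayPower

variable {δ1 δ2 lam y0 : ℝ}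

lemma ite_cutoff_eq_relayPower {x0 ρ : ℝ} (hδ1 : 0 ≤ δ1) (hx0 : 0 < x0) (hy0 : 0 < y0)
    (hρ : 0 < ρ) (hρ_ge : δ1 / y0 ≤ ρ) (x y : ℝ) :
    (if x0 ≤ x ∧ y0 ≤ y ∧ max (δ1 / y) (δ2 / x) ≤ ρ then max (δ1 / y) (δ2 / x) else 0) =
      relayPower δ1 δ2 (max x0 (δ2 / ρ)) y0 x y := by
  refine if_congr ⟨fun ⟨hx, hy, hmax⟩ => ⟨max_le hx ?_, hy⟩, fun ⟨hx, hy⟩ => ?_⟩ rfl rfl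
  · have := (div_le_iff₀ (hx0.trans_le hx)).1 ((le_max_right _ _).trans hmax)
    rw [div_le_iff₀ hρ]
    linarith
  · obtain ⟨hx0x, hρx⟩ := max_le_iff.1 hx
    refine ⟨hx0x, hy, max_le ((div_le_div_of_nonneg_left hδ1 hy0 hy).trans hρ_ge) ?_⟩
    rw [div_le_iff₀ hρ] at hρx
    rw [div_le_iff₀ (hx0.trans_le hx0x)]
    linarith

lemma measurable_relayPower :
    Measurable fun p : ℝ × ℝ => relayPower δ1 δ2 lam y0 p.1 p.2 :=
  Measurable.ite ((measurableSet_le measurable_const measurable_fst).inter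
    (measurableSet_le measurable_const measurable_snd)) (by fun_prop) measurable_const

lemma abs_relayPower_le (hδ1 : 0 ≤ δ1) (hδ2 : 0 ≤ δ2) (hlam : 0 < lam) (hy0 : 0 < y0)
    (x y : ℝ) : |relayPower δ1 δ2 lam y0 x y| ≤ δ1 / y0 + δ2 / lam := by
  unfold relayPower
  split_ifs with h
  · obtain ⟨hx, hy⟩ := h
    have h1 : δ1 / y ≤ δ1 / y0 := div_le_div_of_nonneg_left hδ1 hy0 hy
    have h2 : δ2 / x ≤ δ2 / lam := div_le_div_of_nonneg_left hδ2 hlam hx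
    rw [abs_of_nonneg ((div_nonneg hδ1 (hy0.trans_le hy).le).trans (le_max_left _ _))]
    exact max_le (by linarith [div_nonneg hδ2 hlam.le]) (by linarith [div_nonneg hδ1 hy0.le])
  · rw [abs_zero]
    positivity

lemma integral_relayPower_expMeasure_left {a : ℝ} (ha : 0 < a) (hδ1 : 0 < δ1) (hδ2 : 0 ≤ δ2)
    (hlam : 0 < lam) (hy0 : 0 < y0) (hlam_le : δ1 * lam ≤ δ2 * y0) (y : ℝ) :
    ∫ x, relayPower δ1 δ2 lam y0 x y ∂expMeasure a =
      (Ici y0).indicator (fun y => a * δ2 * (expInt (a * lam) - expInt (a * δ2 / δ1 * y)) +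
        δ1 / y * exp (-(a * δ2 / δ1 * y))) y := by
  by_cases hy : y0 ≤ y
  · have hy_pos : 0 < y := hy0.trans_le hy
    have hslice : (fun x => relayPower δ1 δ2 lam y0 x y) =
        (Ici lam).indicator fun x => max (δ1 / y) (δ2 / x) := by
      ext x
      simp only [relayPower, indicator_apply, mem_Ici, hy, and_true]
    have hlam_le' : lam ≤ δ2 / (δ1 / y) := by
      rw [div_div_eq_mul_div, le_div_iff₀ hδ1]
      nlinarith
    have hscale : a * (δ2 / (δ1 / y)) = a * δ2 / δ1 * y := by field_simp
    rw [hslice, integral_indicator_Ici_expMeasure ha hlam.le,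
      setIntegral_mul_exp_neg_mul_max_div ha (by positivity) hlam hlam_le', hscale,
      indicator_of_mem (mem_Ici.2 hy)]
  · have hslice : (fun x => relayPower δ1 δ2 lam y0 x y) = 0 := by
      ext x
      simp only [relayPower, hy, and_false, if_false, Pi.zero_apply]
    rw [hslice, Pi.zero_def, integral_zero, indicator_of_notMem (by simpa using hy)]

lemma integral_relayPower_expMeasure_prod {a b : ℝ} (ha : 0 < a) (hb : 0 < b)
    (hδ1 : 0 < δ1) (hδ2 : 0 < δ2) (hlam : 0 < lam) (hy0 : 0 < y0)
    (hlam_le : δ1 * lam ≤ δ2 * y0) :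
    ∫ p, relayPower δ1 δ2 lam y0 p.1 p.2 ∂(expMeasure a).prod (expMeasure b) =
      a * δ2 * expInt (a * lam) * exp (-(b * y0))
      - a * δ2 * expInt (a * δ2 / δ1 * y0) * exp (-(b * y0))
      + a * δ2 * expInt ((b + a * δ2 / δ1) * y0)
      + b * δ1 * expInt ((b + a * δ2 / δ1) * y0) := by
  have := isProbabilityMeasure_expMeasure ha
  have := isProbabilityMeasure_expMeasure hb
  have hint : Integrable (fun p : ℝ × ℝ => relayPower δ1 δ2 lam y0 p.1 p.2)
      ((expMeasure a).prod (expMeasure b)) :=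
    (integrable_const (δ1 / y0 + δ2 / lam)).mono' measurable_relayPower.aestronglyMeasurable
      (ae_of_all _ fun p => abs_relayPower_le hδ1.le hδ2.le hlam hy0 p.1 p.2)
  rw [integral_prod_symm _ hint]
  simp_rw [integral_relayPower_expMeasure_left ha hδ1 hδ2.le hlam hy0 hlam_le]
  rw [integral_indicator_Ici_expMeasure hb hy0.le]
  set c := a * δ2 / δ1
  have hc : 0 < c := by positivity
  have hsplit : ∀ y ∈ Ioi y0,
      b * exp (-(b * y)) * (a * δ2 * (expInt (a * lam) - expInt (c * y)) + δ1 / y * exp (-(c * y)))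
        = a * δ2 * expInt (a * lam) * (b * exp (-(b * y)))
          - a * δ2 * (b * exp (-(b * y)) * expInt (c * y))
          + b * δ1 * (exp (-((b + c) * y)) / y) := by
    intro y _
    rw [add_mul, neg_add, exp_add]
    ring
  have hexp := ((integrableOn_exp_neg_mul_Ioi hb y0).const_mul b).const_mul
    (a * δ2 * expInt (a * lam))
  have hexpInt := (integrableOn_mul_exp_neg_mul_expInt hb hc hy0).const_mul (a * δ2)
  have hdiv := (integrableOn_exp_neg_mul_div_Ioi (add_pos hb hc) hy0).const_mul (b * δ1)
  rw [setIntegral_congr_fun measurableSet_Ioi hsplit, integral_add (hexp.sub' hexpInt) hdiv,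
    integral_sub hexp hexpInt, integral_const_mul (a * δ2 * expInt (a * lam)),
    integral_const_mul (a * δ2), integral_const_mul (b * δ1),
    setIntegral_mul_exp_neg_mul_Ioi hb, setIntegral_mul_exp_neg_mul_expInt hb hc hy0,
    setIntegral_exp_neg_mul_div_Ioi (add_pos hb hc)]
  ring

end RelayPower

theorem stmt_9_general {Ωsp : Type*} [MeasurableSpace Ωsp] (μ : Measure Ωsp)
    (X Y : Ωsp → ℝ) (hX : Measurable X) (hY : Measurable Y)
    (hindep : IndepFun X Y μ)
    (ΩX ΩY δ1 δ2 x0 y0 ρ : ℝ)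
    (hΩX : 0 < ΩX) (hΩY : 0 < ΩY) (hδ1 : 0 < δ1) (hδ2 : 0 < δ2)
    (hx0 : 0 < x0) (hy0 : 0 < y0) (hρ : 0 < ρ)
    (hreg : δ1 * x0 < δ2 * y0) (hρge : δ1 / y0 ≤ ρ)
    (hXdist : Measure.map X μ = expMeasure (1 / ΩX))
    (hYdist : Measure.map Y μ = expMeasure (1 / ΩY))
    (lam1 : ℝ) (hlam1 : lam1 = max x0 (δ2 / ρ))
    (Pstar : ℝ → ℝ → ℝ)
    (hPstar : ∀ x y, Pstar x y =
      if x0 ≤ x ∧ y0 ≤ y ∧ max (δ1 / y) (δ2 / x) ≤ ρ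
      then max (δ1 / y) (δ2 / x) else 0) :
    ∫ ω, Pstar (X ω) (Y ω) ∂μ =
      (δ2 / ΩX) * expInt (lam1 / ΩX) * Real.exp (-y0 / ΩY)
      - (δ2 / ΩX) * expInt (δ2 * y0 / (δ1 * ΩX)) * Real.exp (-y0 / ΩY)
      + (δ2 / ΩX) * expInt ((1 / ΩY + δ2 / (δ1 * ΩX)) * y0)
      + (δ1 / ΩY) * expInt ((1 / ΩY + δ2 / (δ1 * ΩX)) * y0) := by
  have hlam : 0 < lam1 := hlam1 ▸ lt_max_of_lt_left hx0
  have hlam_le : δ1 * lam1 ≤ δ2 * y0 := by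
    rw [hlam1, mul_max_of_nonneg _ _ hδ1.le]
    refine max_le hreg.le ?_
    rw [mul_div_assoc', div_le_iff₀ hρ]
    have := (div_le_iff₀ hy0).1 hρge
    nlinarith
  have hP : (fun ω => Pstar (X ω) (Y ω)) = fun ω => relayPower δ1 δ2 lam1 y0 (X ω) (Y ω) := by
    ext ω
    rw [hPstar, hlam1, ite_cutoff_eq_relayPower hδ1.le hx0 hy0 hρ hρge]
  have := isProbabilityMeasure_expMeasure (one_div_pos.2 hΩX)
  have := isProbabilityMeasure_expMeasure (one_div_pos.2 hΩY)
  have : SigmaFinite (μ.map X) := hXdist ▸ inferInstance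
  have : SigmaFinite (μ.map Y) := hYdist ▸ inferInstance
  rw [hP, hindep.integral_comp_eq_integral_prod_map hX.aemeasurable hY.aemeasurable
      (f := fun p => relayPower δ1 δ2 lam1 y0 p.1 p.2) measurable_relayPower.aestronglyMeasurable,
    hXdist, hYdist,
    integral_relayPower_expMeasure_prod (by positivity) (by positivity) hδ1 hδ2 hlam hy0 hlam_le,
    show 1 / ΩX * δ2 / δ1 = δ2 / (δ1 * ΩX) by field_simp, one_div_mul_eq_div ΩX lam1,
    div_mul_eq_mul_div δ2 _ y0, show -(1 / ΩY * y0) = -y0 / ΩY by ring]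
  ring

/-- average relay output power of the optimal truncated allocation in the
regime `δ2 y0 > δ1 x0`, `ρ ≥ δ1/y0`, with `lam1 = max x0 (δ2/ρ)`. -/
theorem stmt_9 {Ωsp : Type*} [MeasurableSpace Ωsp] (μ : Measure Ωsp)
    [IsProbabilityMeasure μ]
    (X Y : Ωsp → ℝ) (hX : Measurable X) (hY : Measurable Y)
    (hindep : IndepFun X Y μ)
    (ΩX ΩY δ1 δ2 x0 y0 ρ : ℝ)
    (hΩX : 0 < ΩX) (hΩY : 0 < ΩY) (hδ1 : 0 < δ1) (hδ2 : 0 < δ2)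
    (hx0 : 0 < x0) (hy0 : 0 < y0) (hρ : 0 < ρ)
    (hreg : δ1 * x0 < δ2 * y0) (hρge : δ1 / y0 ≤ ρ)
    (hXdist : Measure.map X μ = expMeasure (1 / ΩX))
    (hYdist : Measure.map Y μ = expMeasure (1 / ΩY))
    (lam1 : ℝ) (hlam1 : lam1 = max x0 (δ2 / ρ))
    (Pstar : ℝ → ℝ → ℝ)
    (hPstar : ∀ x y, Pstar x y =
      if x0 ≤ x ∧ y0 ≤ y ∧ max (δ1 / y) (δ2 / x) ≤ ρ
      then max (δ1 / y) (δ2 / x) else 0) :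
    ∫ ω, Pstar (X ω) (Y ω) ∂μ =
      (δ2 / ΩX) * expInt (lam1 / ΩX) * Real.exp (-y0 / ΩY)
      - (δ2 / ΩX) * expInt (δ2 * y0 / (δ1 * ΩX)) * Real.exp (-y0 / ΩY)
      + (δ2 / ΩX) * expInt ((1 / ΩY + δ2 / (δ1 * ΩX)) * y0)
      + (δ1 / ΩY) * expInt ((1 / ΩY + δ2 / (δ1 * ΩX)) * y0) :=
  stmt_9_general μ X Y hX hY hindep ΩX ΩY δ1 δ2 x0 y0 ρ hΩX hΩY hδ1 hδ2 hx0 hy0 hρ hreg hρge hXdist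
    hYdist lam1 hlam1 Pstar hPstar
end

section
/- Let X and Y be independent exponentially distributed random variables with means Ω_X > 0 and Ω_Y > 0, and let δ1, δ2, x0, y0 > 0 with δ2·y0 > δ1·x0. Define P_{R,st}(x,y) = max{δ1/y, δ2/x} for x ≥ x0 and y ≥ y0, and P_{R,st}(x,y) = 0 otherwise. Then the maximum average relay output power equals E[P_{R,st}(X,Y)] = (δ2/Ω_X)·e^{−y0/Ω_Y}·[E1(x0/Ω_X) − E1(δ2·y0/(δ1·Ω_X))] + (δ1/Ω_Y + δ2/Ω_X)·E1(y0/Ω_Y + δ2·y0/(δ1·Ω_X)), where E1(z) = ∫_z^{∞}(e^{−t}/t) dt. -/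
/-!
Push the expectation forward to the product of the two exponential laws. On `x ≥ x0, y ≥ y0` the
maximum is `δ1/y` exactly when `x > (δ2/δ1) y`. Because `δ2 y0 > δ1 x0`, the rest of the region
splits, at `c = (δ2/δ1) y0`, into the rectangle `[x0, c] × [y0, ∞)` and the wedge
`x > c, y ≥ (δ1/δ2) x`. On each of the three pieces, integrating out the variable that the integrand
does not depend on leaves an exponential tail `e^{-rt}`. The remaining one-dimensional integrals
have the form `∫_t^∞ e^{-sx}/x dx = E1(st)`.
-/

open MeasureTheory ProbabilityTheory

open Set Real

section ExpInt

variable {r : ℝ}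

theorem integral_exp_neg_mul_div_Ioi_s11 (hr : 0 < r) (u : ℝ) :
    ∫ x in Ioi u, exp (-(r * x)) / x = expInt (r * u) := by
  have h := integral_comp_mul_left_Ioi (fun t => exp (-t) / t) u hr
  simp only [smul_eq_mul] at h
  calc ∫ x in Ioi u, exp (-(r * x)) / x = ∫ x in Ioi u, r * (exp (-(r * x)) / (r * x)) := by
        refine integral_congr_ae (ae_of_all _ fun x => ?_)
        rcases eq_or_ne x 0 with rfl | hx
        · simp
        · field_simp
    _ = expInt (r * u) := by rw [integral_const_mul, h, expInt, mul_inv_cancel_left₀ hr.ne']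

theorem integrableOn_exp_neg_mul_div_Ioi_s11 (hr : 0 < r) {u : ℝ} (hu : 0 < u) :
    IntegrableOn (fun x => exp (-(r * x)) / x) (Ioi u) := by
  have hmeas : Measurable fun x => exp (-(r * x)) / x := by fun_prop
  refine ((exp_neg_integrableOn_Ioi u hr).div_const u).mono' hmeas.aestronglyMeasurable ?_
  filter_upwards [ae_restrict_mem measurableSet_Ioi] with x hx
  rw [norm_div, norm_of_nonneg (exp_pos _).le, norm_of_nonneg (hu.trans hx).le, neg_mul]
  exact div_le_div_of_nonneg_left (exp_pos _).le hu (le_of_lt hx)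

theorem integral_exp_neg_mul_div_Ioc (hr : 0 < r) {u v : ℝ} (hu : 0 < u) (huv : u ≤ v) :
    ∫ x in Ioc u v, exp (-(r * x)) / x = expInt (r * u) - expInt (r * v) := by
  have hint := integrableOn_exp_neg_mul_div_Ioi_s11 hr hu
  have h := setIntegral_union (Ioc_disjoint_Ioi le_rfl) measurableSet_Ioi
    (hint.mono_set Ioc_subset_Ioi_self) (hint.mono_set (Ioi_subset_Ioi huv))
  rw [Ioc_union_Ioi_eq_Ioi huv, integral_exp_neg_mul_div_Ioi_s11 hr,
    integral_exp_neg_mul_div_Ioi_s11 hr] at h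
  linarith

end ExpInt

section ExpMeasure

variable {r : ℝ}

theorem expMeasure_absolutelyContinuous (r : ℝ) : expMeasure r ≪ volume :=
  withDensity_absolutelyContinuous _ _

theorem setIntegral_expMeasure (hr : 0 < r) {s : Set ℝ} (hs : MeasurableSet s)
    (hs0 : s ⊆ Ici 0) (g : ℝ → ℝ) :
    ∫ x in s, g x ∂expMeasure r = ∫ x in s, r * exp (-(r * x)) * g x := by
  have hpdf : Measurable (gammaPDF 1 r) := (measurable_gammaPDFReal 1 r).ennreal_ofReal
  rw [expMeasure, gammaMeasure]
  refine (setIntegral_withDensity_eq_setIntegral_toReal_smul hpdf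
    (ae_of_all _ fun _ => ENNReal.ofReal_lt_top) g hs).trans
    (setIntegral_congr_fun hs fun x hx => ?_)
  rw [smul_eq_mul, gammaPDF, ENNReal.toReal_ofReal (gammaPDFReal_nonneg one_pos hr x),
    gammaPDFReal, if_pos (mem_Ici.mp (hs0 hx))]
  simp

theorem expMeasure_real_Ioi (hr : 0 < r) {t : ℝ} (ht : 0 ≤ t) :
    (expMeasure r).real (Ioi t) = exp (-(r * t)) := by
  have h := setIntegral_expMeasure hr measurableSet_Ioi (Ioi_subset_Ici ht) fun _ => (1 : ℝ)
  rw [setIntegral_const, smul_eq_mul, mul_one] at h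
  simp_rw [h, mul_one, ← neg_mul]
  rw [integral_const_mul, integral_exp_mul_Ioi (neg_neg_of_pos hr)]
  field_simp

theorem expMeasure_real_Ici (hr : 0 < r) {t : ℝ} (ht : 0 ≤ t) :
    (expMeasure r).real (Ici t) = exp (-(r * t)) := by
  rw [← expMeasure_real_Ioi hr ht,
    measureReal_congr ((expMeasure_absolutelyContinuous r).ae_eq Ioi_ae_eq_Ici)]

theorem integral_expMeasure_ite_lt (hr : 0 < r) {t : ℝ} (ht : 0 ≤ t) (C : ℝ) :
    ∫ x, (if t < x then C else 0) ∂expMeasure r = C * exp (-(r * t)) := by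
  have h := integral_indicator_const (μ := expMeasure r) C (measurableSet_Ioi (a := t))
  simp only [indicator_apply, mem_Ioi] at h
  rw [h, expMeasure_real_Ioi hr ht, smul_eq_mul, mul_comm]

theorem integral_expMeasure_ite_le (hr : 0 < r) {t : ℝ} (ht : 0 ≤ t) (C : ℝ) :
    ∫ x, (if t ≤ x then C else 0) ∂expMeasure r = C * exp (-(r * t)) := by
  have h := integral_indicator_const (μ := expMeasure r) C (measurableSet_Ici (a := t))
  simp only [indicator_apply, mem_Ici] at h
  rw [h, expMeasure_real_Ici hr ht, smul_eq_mul, mul_comm]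

theorem setIntegral_Ioi_expMeasure_div_mul_exp (hr : 0 < r) {s t : ℝ} (hs : 0 ≤ s)
    (ht : 0 ≤ t) (C : ℝ) :
    ∫ x in Ioi t, C / x * exp (-(s * x)) ∂expMeasure r = r * C * expInt ((r + s) * t) := by
  rw [setIntegral_expMeasure hr measurableSet_Ioi (Ioi_subset_Ici ht),
    ← integral_exp_neg_mul_div_Ioi_s11 (by linarith : 0 < r + s), ← integral_const_mul]
  refine setIntegral_congr_fun measurableSet_Ioi fun x _ => ?_
  rw [add_mul, neg_add, exp_add]
  ring

theorem setIntegral_Icc_expMeasure_div (hr : 0 < r) {u v : ℝ} (hu : 0 < u) (huv : u ≤ v)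
    (C : ℝ) :
    ∫ x in Icc u v, C / x ∂expMeasure r = r * C * (expInt (r * u) - expInt (r * v)) := by
  rw [← setIntegral_congr_set ((expMeasure_absolutelyContinuous r).ae_eq Ioc_ae_eq_Icc),
    setIntegral_expMeasure hr measurableSet_Ioc fun x hx => mem_Ici.2 (hu.trans hx.1).le,
    ← integral_exp_neg_mul_div_Ioc hr hu huv, ← integral_const_mul]
  refine setIntegral_congr_fun measurableSet_Ioc fun x _ => ?_
  ring

end ExpMeasure

theorem integrable_ite_div_of_le {α : Type*} [MeasurableSpace α] {ν : Measure α}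
    [IsFiniteMeasure ν] {P : α → Prop} [DecidablePred P] (hP : MeasurableSet {p | P p})
    {f : α → ℝ} (hf : Measurable f) {t : ℝ} (ht : 0 < t) (hPf : ∀ p, P p → t ≤ f p) (C : ℝ) :
    Integrable (fun p => if P p then C / f p else 0) ν := by
  have hmeas : Measurable fun p => if P p then C / f p else 0 :=
    Measurable.ite hP (measurable_const.div hf) measurable_const
  refine Integrable.of_bound hmeas.aestronglyMeasurable (|C| / t) (ae_of_all _ fun p => ?_)
  split_ifs with hp
  · rw [norm_div, Real.norm_eq_abs, Real.norm_eq_abs, abs_of_pos (ht.trans_le (hPf p hp))]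
    exact div_le_div_of_nonneg_left (abs_nonneg C) ht (hPf p hp)
  · rw [norm_zero]
    positivity

section ProdExpMeasure

variable {a b : ℝ}

theorem integral_prod_expMeasure_ite_le_lt (ha : 0 < a) (hb : 0 < b) {κ y0 : ℝ} (hκ : 0 ≤ κ)
    (hy0 : 0 < y0) (C : ℝ) :
    ∫ p, (if y0 ≤ p.2 ∧ κ * p.2 < p.1 then C / p.2 else 0) ∂(expMeasure a).prod (expMeasure b)
      = b * C * expInt ((b + a * κ) * y0) := by
  have := isProbabilityMeasure_expMeasure ha
  have := isProbabilityMeasure_expMeasure hb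
  have hinner : ∀ y, ∫ x, (if y0 ≤ y ∧ κ * y < x then C / y else 0) ∂expMeasure a
      = (Ici y0).indicator (fun y => C / y * exp (-(a * κ * y))) y := by
    intro y
    by_cases hy : y0 ≤ y
    · simp only [hy, true_and, indicator_of_mem (mem_Ici.2 hy),
        integral_expMeasure_ite_lt ha (mul_nonneg hκ (hy0.le.trans hy)), mul_assoc]
    · simp [hy]
  rw [integral_prod_symm _ (integrable_ite_div_of_le (by measurability) measurable_snd hy0
    (fun _ hp => hp.1) C)]
  simp_rw [hinner]
  rw [integral_indicator measurableSet_Ici,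
    setIntegral_congr_set ((expMeasure_absolutelyContinuous b).ae_eq Ioi_ae_eq_Ici).symm,
    setIntegral_Ioi_expMeasure_div_mul_exp hb (by positivity) hy0.le]

theorem integral_prod_expMeasure_ite_lt_le (ha : 0 < a) (hb : 0 < b) {κ c : ℝ} (hκ : 0 ≤ κ)
    (hc : 0 < c) (C : ℝ) :
    ∫ p, (if c < p.1 ∧ κ * p.1 ≤ p.2 then C / p.1 else 0) ∂(expMeasure a).prod (expMeasure b)
      = a * C * expInt ((a + b * κ) * c) := by
  have := isProbabilityMeasure_expMeasure ha
  have := isProbabilityMeasure_expMeasure hb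
  have hinner : ∀ x, ∫ y, (if c < x ∧ κ * x ≤ y then C / x else 0) ∂expMeasure b
      = (Ioi c).indicator (fun x => C / x * exp (-(b * κ * x))) x := by
    intro x
    by_cases hx : c < x
    · simp only [hx, true_and, indicator_of_mem (mem_Ioi.2 hx),
        integral_expMeasure_ite_le hb (mul_nonneg hκ (hc.trans hx).le), mul_assoc]
    · simp [hx]
  rw [integral_prod _ (integrable_ite_div_of_le (by measurability) measurable_fst hc
    (fun _ hp => hp.1.le) C)]
  simp_rw [hinner]
  rw [integral_indicator measurableSet_Ioi,
    setIntegral_Ioi_expMeasure_div_mul_exp ha (by positivity) hc.le]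

theorem integral_prod_expMeasure_ite_Icc_le (ha : 0 < a) (hb : 0 < b) {u v y0 : ℝ} (hu : 0 < u)
    (huv : u ≤ v) (hy0 : 0 ≤ y0) (C : ℝ) :
    ∫ p, (if (u ≤ p.1 ∧ p.1 ≤ v) ∧ y0 ≤ p.2 then C / p.1 else 0)
        ∂(expMeasure a).prod (expMeasure b)
      = a * C * exp (-(b * y0)) * (expInt (a * u) - expInt (a * v)) := by
  have := isProbabilityMeasure_expMeasure ha
  have := isProbabilityMeasure_expMeasure hb
  have hsplit : ∀ p : ℝ × ℝ, (if (u ≤ p.1 ∧ p.1 ≤ v) ∧ y0 ≤ p.2 then C / p.1 else 0)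
      = (Icc u v).indicator (fun x => C / x) p.1 * (if y0 ≤ p.2 then 1 else 0) := by
    intro p
    by_cases h1 : u ≤ p.1 ∧ p.1 ≤ v <;> by_cases h2 : y0 ≤ p.2 <;> simp [h1, h2]
  simp_rw [hsplit]
  rw [integral_prod_mul ((Icc u v).indicator fun x => C / x) fun y => if y0 ≤ y then 1 else 0,
    integral_indicator measurableSet_Icc,
    setIntegral_Icc_expMeasure_div ha hu huv, integral_expMeasure_ite_le hb hy0]
  ring

end ProdExpMeasure

theorem ite_max_div_div_eq_add {δ1 δ2 x0 y0 : ℝ} (hδ1 : 0 < δ1) (hδ2 : 0 < δ2) (hx0 : 0 < x0)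
    (hy0 : 0 < y0) (hreg : δ1 * x0 < δ2 * y0) (x y : ℝ) :
    (if x0 ≤ x ∧ y0 ≤ y then max (δ1 / y) (δ2 / x) else 0)
      = (if y0 ≤ y ∧ δ2 / δ1 * y < x then δ1 / y else 0)
        + (if (x0 ≤ x ∧ x ≤ δ2 / δ1 * y0) ∧ y0 ≤ y then δ2 / x else 0)
        + (if δ2 / δ1 * y0 < x ∧ δ1 / δ2 * x ≤ y then δ2 / x else 0) := by
  have hlt : ∀ t, δ2 / δ1 * t < x ↔ δ2 * t < δ1 * x := fun t => by
    rw [div_mul_eq_mul_div, div_lt_iff₀ hδ1, mul_comm x]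
  have hle : x ≤ δ2 / δ1 * y0 ↔ δ1 * x ≤ δ2 * y0 := by
    rw [div_mul_eq_mul_div, le_div_iff₀ hδ1, mul_comm x]
  have hle' : δ1 / δ2 * x ≤ y ↔ δ1 * x ≤ δ2 * y := by
    rw [div_mul_eq_mul_div, div_le_iff₀ hδ2, mul_comm y]
  simp only [hlt, hle, hle']
  by_cases hxy : x0 ≤ x ∧ y0 ≤ y
  · have hx : 0 < x := hx0.trans_le hxy.1
    have hy : 0 < y := hy0.trans_le hxy.2
    have hδy : δ2 * y0 ≤ δ2 * y := mul_le_mul_of_nonneg_left hxy.2 hδ2.le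
    rw [if_pos hxy]
    by_cases hmax : δ2 * y < δ1 * x
    · rw [if_pos ⟨hxy.2, hmax⟩, if_neg fun h => by linarith [h.1.2],
        if_neg fun h => by linarith [h.2], max_eq_left ((div_le_div_iff₀ hx hy).2 hmax.le),
        add_zero, add_zero]
    · have hmax' : δ1 / y ≤ δ2 / x := (div_le_div_iff₀ hy hx).2 (by linarith)
      rw [if_neg fun h => hmax h.2, max_eq_right hmax', zero_add]
      by_cases hc : δ1 * x ≤ δ2 * y0
      · rw [if_pos ⟨⟨hxy.1, hc⟩, hxy.2⟩, if_neg fun h => by linarith [h.1], add_zero]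
      · rw [if_neg fun h => hc h.1.2, if_pos ⟨by linarith, by linarith⟩, zero_add]
  · have hx0_le : ∀ {t}, δ1 * x0 < t → t < δ1 * x → x0 ≤ x := fun h1 h2 =>
      (lt_of_mul_lt_mul_left (h1.trans h2) hδ1.le).le
    rw [if_neg hxy, if_neg fun h => hxy ⟨hx0_le hreg (by nlinarith [h.1, h.2]), h.1⟩,
      if_neg fun h => hxy ⟨h.1.1, h.2⟩, if_neg fun h => hxy ⟨hx0_le hreg h.1, ?_⟩]
    · simp
    · exact (lt_of_mul_lt_mul_left (h.1.trans_le h.2) hδ2.le).le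

theorem integral_prod_expMeasure_ite_max_div_div {a b δ1 δ2 x0 y0 : ℝ} (ha : 0 < a) (hb : 0 < b)
    (hδ1 : 0 < δ1) (hδ2 : 0 < δ2) (hx0 : 0 < x0) (hy0 : 0 < y0) (hreg : δ1 * x0 < δ2 * y0) :
    ∫ p, (if x0 ≤ p.1 ∧ y0 ≤ p.2 then max (δ1 / p.2) (δ2 / p.1) else 0)
        ∂(expMeasure a).prod (expMeasure b)
      = a * δ2 * exp (-(b * y0)) * (expInt (a * x0) - expInt (a * (δ2 / δ1 * y0)))
        + (a * δ2 + b * δ1) * expInt ((b + a * (δ2 / δ1)) * y0) := by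
  have := isProbabilityMeasure_expMeasure ha
  have := isProbabilityMeasure_expMeasure hb
  have hc : x0 ≤ δ2 / δ1 * y0 := by
    rw [div_mul_eq_mul_div, le_div_iff₀ hδ1]
    linarith
  have hwedge : (a + b * (δ1 / δ2)) * (δ2 / δ1 * y0) = (b + a * (δ2 / δ1)) * y0 := by
    field_simp
    ring
  have iA : Integrable (fun p : ℝ × ℝ => if y0 ≤ p.2 ∧ δ2 / δ1 * p.2 < p.1 then δ1 / p.2 else 0)
      ((expMeasure a).prod (expMeasure b)) :=
    integrable_ite_div_of_le (by measurability) measurable_snd hy0 (fun _ hp => hp.1) _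
  have iB1 : Integrable
      (fun p : ℝ × ℝ => if (x0 ≤ p.1 ∧ p.1 ≤ δ2 / δ1 * y0) ∧ y0 ≤ p.2 then δ2 / p.1 else 0)
      ((expMeasure a).prod (expMeasure b)) :=
    integrable_ite_div_of_le (by measurability) measurable_fst hx0 (fun _ hp => hp.1.1) _
  have iB2 : Integrable
      (fun p : ℝ × ℝ => if δ2 / δ1 * y0 < p.1 ∧ δ1 / δ2 * p.1 ≤ p.2 then δ2 / p.1 else 0)
      ((expMeasure a).prod (expMeasure b)) :=
    integrable_ite_div_of_le (by measurability) measurable_fst (hx0.trans_le hc)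
      (fun _ hp => hp.1.le) _
  simp_rw [ite_max_div_div_eq_add hδ1 hδ2 hx0 hy0 hreg]
  rw [integral_add (iA.fun_add iB1) iB2, integral_add iA iB1,
    integral_prod_expMeasure_ite_le_lt ha hb (by positivity) hy0,
    integral_prod_expMeasure_ite_Icc_le ha hb hx0 hc hy0.le,
    integral_prod_expMeasure_ite_lt_le ha hb (by positivity) (hx0.trans_le hc), hwedge]
  ring

/-- maximum average relay output power of the untruncated minimum short-term
allocation `P_{R,st}` in the regime `δ2 y0 > δ1 x0`. -/
theorem stmt_11 {Ωsp : Type*} [MeasurableSpace Ωsp] (μ : Measure Ωsp)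
    [IsProbabilityMeasure μ]
    (X Y : Ωsp → ℝ) (hX : Measurable X) (hY : Measurable Y)
    (hindep : IndepFun X Y μ)
    (ΩX ΩY δ1 δ2 x0 y0 : ℝ)
    (hΩX : 0 < ΩX) (hΩY : 0 < ΩY) (hδ1 : 0 < δ1) (hδ2 : 0 < δ2)
    (hx0 : 0 < x0) (hy0 : 0 < y0)
    (hreg : δ1 * x0 < δ2 * y0)
    (hXdist : Measure.map X μ = expMeasure (1 / ΩX))
    (hYdist : Measure.map Y μ = expMeasure (1 / ΩY))
    (PRst : ℝ → ℝ → ℝ)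
    (hPRst : ∀ x y, PRst x y =
      if x0 ≤ x ∧ y0 ≤ y then max (δ1 / y) (δ2 / x) else 0) :
    ∫ ω, PRst (X ω) (Y ω) ∂μ =
      (δ2 / ΩX) * Real.exp (-y0 / ΩY) *
        (expInt (x0 / ΩX) - expInt (δ2 * y0 / (δ1 * ΩX)))
      + (δ1 / ΩY + δ2 / ΩX) * expInt (y0 / ΩY + δ2 * y0 / (δ1 * ΩX)) := by
  have hmap : μ.map (fun ω => (X ω, Y ω)) = (expMeasure (1 / ΩX)).prod (expMeasure (1 / ΩY)) := by
    rw [← hXdist, ← hYdist]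
    exact (indepFun_iff_map_prod_eq_prod_map_map hX.aemeasurable hY.aemeasurable).mp hindep
  have hF : Measurable fun p : ℝ × ℝ =>
      if x0 ≤ p.1 ∧ y0 ≤ p.2 then max (δ1 / p.2) (δ2 / p.1) else 0 :=
    Measurable.ite (by measurability) (by fun_prop) measurable_const
  have h := integral_map (μ := μ) (hX.prodMk hY).aemeasurable hF.aestronglyMeasurable
  rw [hmap, integral_prod_expMeasure_ite_max_div_div (by positivity) (by positivity) hδ1 hδ2 hx0
    hy0 hreg] at h
  simp_rw [hPRst, ← h]
  -- `ring_nf` also normalises the arguments of `expInt` and `exp` on both sides.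
  ring_nf
end

section
/- Let X and Y be independent exponentially distributed random variables with means Ω_X > 0 and Ω_Y > 0, let δ1, δ2, x0, y0, ρ > 0 with δ2·y0 ≤ δ1·x0 and ρ ≥ δ2/x0, and set λ1 = max{x0, δ2/ρ} and λ2 = max{y0, δ1/ρ}. Then the system outage probability, i.e., the probability of the complement of the event {X ≥ x0, Y ≥ y0, max{δ1/Y, δ2/X} ≤ ρ}, equals 1 − e^{−x0/Ω_X}·e^{−λ2/Ω_Y} − e^{−λ1·(1/Ω_X + δ1/(δ2·Ω_Y))} + (δ2·Ω_Y/(δ1·Ω_X + δ2·Ω_Y))·e^{−x0·(1/Ω_X + δ1/(δ2·Ω_Y))} + (δ1·Ω_X/(δ1·Ω_X + δ2·Ω_Y))·e^{−λ1·(1/Ω_X + δ1/(δ2·Ω_Y))}. -/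
/-!
On the non-outage event both links exceed their cutoffs, so `δ2 / X ≤ δ2 / x0 ≤ ρ` holds
automatically and the relay constraint reduces to `Y ≥ δ1 / ρ`: the event is the product event
`{X ≥ x0} ∩ {Y ≥ λ2}`, whose probability is `e^{-x0/Ω_X} e^{-λ2/Ω_Y}` by independence.
In this regime `λ1 = x0`, and the last three terms of the closed form cancel because the two
weights `δ2 Ω_Y / (δ1 Ω_X + δ2 Ω_Y)` and `δ1 Ω_X / (δ1 Ω_X + δ2 Ω_Y)` sum to one.
-/

open MeasureTheory ProbabilityTheory Set

lemma expMeasure_Ici {r t : ℝ} (hr : 0 < r) (ht : 0 ≤ t) :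
    expMeasure r (Ici t) = ENNReal.ofReal (Real.exp (-(r * t))) := by
  have := isProbabilityMeasure_expMeasure hr
  have hatom : expMeasure r {t} = 0 :=
    withDensity_absolutelyContinuous _ _ (measure_singleton t)
  have hle : Real.exp (-(r * t)) ≤ 1 := Real.exp_le_one_iff.2 (by nlinarith)
  calc expMeasure r (Ici t) = expMeasure r (Iic t)ᶜ := by
        rw [compl_Iic]; exact measure_congr (Ioi_ae_eq_Ici' hatom).symm
    _ = 1 - ENNReal.ofReal (1 - Real.exp (-(r * t))) := by
        rw [prob_compl_eq_one_sub measurableSet_Iic, ← ofReal_cdf, cdf_expMeasure_eq hr, if_pos ht]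
    _ = ENNReal.ofReal (Real.exp (-(r * t))) := by
        rw [← ENNReal.ofReal_one, ← ENNReal.ofReal_sub _ (by linarith), sub_sub_cancel]

section

variable {Ω : Type*} [MeasurableSpace Ω] {μ : Measure Ω} {X Y : Ω → ℝ}

lemma measure_preimage_Ici_of_map_eq_expMeasure (hX : Measurable X) {m t : ℝ} (hm : 0 < m)
    (ht : 0 ≤ t) (hdist : μ.map X = expMeasure (1 / m)) :
    μ (X ⁻¹' Ici t) = ENNReal.ofReal (Real.exp (-t / m)) := by
  rw [← Measure.map_apply hX measurableSet_Ici, hdist, expMeasure_Ici (by positivity) ht]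
  ring_nf

lemma measure_compl_preimage_Ici_inter_of_indepFun [IsProbabilityMeasure μ]
    (hX : Measurable X) (hY : Measurable Y) (hindep : IndepFun X Y μ) {mX mY a b : ℝ}
    (hmX : 0 < mX) (hmY : 0 < mY) (ha : 0 ≤ a) (hb : 0 ≤ b)
    (hXdist : μ.map X = expMeasure (1 / mX)) (hYdist : μ.map Y = expMeasure (1 / mY)) :
    μ (X ⁻¹' Ici a ∩ Y ⁻¹' Ici b)ᶜ =
      ENNReal.ofReal (1 - Real.exp (-a / mX) * Real.exp (-b / mY)) := by
  have hleX : Real.exp (-a / mX) ≤ 1 := Real.exp_le_one_iff.2 (by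
    rw [neg_div]; exact neg_nonpos.2 (by positivity))
  have hleY : Real.exp (-b / mY) ≤ 1 := Real.exp_le_one_iff.2 (by
    rw [neg_div]; exact neg_nonpos.2 (by positivity))
  rw [prob_compl_eq_one_sub ((hX measurableSet_Ici).inter (hY measurableSet_Ici)),
    hindep.measure_inter_preimage_eq_mul _ _ measurableSet_Ici measurableSet_Ici,
    measure_preimage_Ici_of_map_eq_expMeasure hX hmX ha hXdist,
    measure_preimage_Ici_of_map_eq_expMeasure hY hmY hb hYdist,
    ← ENNReal.ofReal_mul (Real.exp_pos _).le, ← ENNReal.ofReal_one,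
    ← ENNReal.ofReal_sub _ (by positivity)]

end

lemma nonOutage_iff {δ1 δ2 x0 y0 ρ x y : ℝ} (hx0 : 0 < x0) (hy0 : 0 < y0) (hρ : 0 < ρ)
    (hρge : δ2 / x0 ≤ ρ) :
    (x0 ≤ x ∧ y0 ≤ y ∧ max (δ1 / y) (δ2 / x) ≤ ρ) ↔ (x0 ≤ x ∧ max y0 (δ1 / ρ) ≤ y) := by
  rw [div_le_iff₀ hx0] at hρge
  simp only [max_le_iff]
  constructor
  · rintro ⟨hx, hy, hδ1y, -⟩
    rw [div_le_iff₀ (hy0.trans_le hy)] at hδ1y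
    exact ⟨hx, hy, by rw [div_le_iff₀ hρ]; linarith⟩
  · rintro ⟨hx, hy, hδ1ρ⟩
    rw [div_le_iff₀ hρ] at hδ1ρ
    refine ⟨hx, hy, ?_, ?_⟩
    · rw [div_le_iff₀ (hy0.trans_le hy)]; linarith
    · rw [div_le_iff₀ (hx0.trans_le hx)]; nlinarith

theorem stmt_13_general {Ωsp : Type*} [MeasurableSpace Ωsp] (μ : Measure Ωsp)
    [IsProbabilityMeasure μ]
    (X Y : Ωsp → ℝ) (hX : Measurable X) (hY : Measurable Y)
    (hindep : IndepFun X Y μ)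
    (ΩX ΩY δ1 δ2 x0 y0 ρ : ℝ)
    (hΩX : 0 < ΩX) (hΩY : 0 < ΩY) (hδ1 : 0 < δ1) (hδ2 : 0 < δ2)
    (hx0 : 0 < x0) (hy0 : 0 < y0) (hρ : 0 < ρ)
    (hρge : δ2 / x0 ≤ ρ)
    (hXdist : Measure.map X μ = expMeasure (1 / ΩX))
    (hYdist : Measure.map Y μ = expMeasure (1 / ΩY))
    (lam1 lam2 : ℝ) (hlam1 : lam1 = max x0 (δ2 / ρ)) (hlam2 : lam2 = max y0 (δ1 / ρ)) :
    μ {ω | x0 ≤ X ω ∧ y0 ≤ Y ω ∧ max (δ1 / Y ω) (δ2 / X ω) ≤ ρ}ᶜ =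
      ENNReal.ofReal (1
        - Real.exp (-x0 / ΩX) * Real.exp (-lam2 / ΩY)
        - Real.exp (-lam1 * (1 / ΩX + δ1 / (δ2 * ΩY)))
        + (δ2 * ΩY / (δ1 * ΩX + δ2 * ΩY)) * Real.exp (-x0 * (1 / ΩX + δ1 / (δ2 * ΩY)))
        + (δ1 * ΩX / (δ1 * ΩX + δ2 * ΩY)) *
            Real.exp (-lam1 * (1 / ΩX + δ1 / (δ2 * ΩY)))) := by
  have hlam1x : lam1 = x0 := hlam1.trans (max_eq_left ((div_le_comm₀ hx0 hρ).1 hρge))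
  have hlam2pos : 0 < lam2 := hlam2 ▸ hy0.trans_le (le_max_left _ _)
  have hevent : {ω | x0 ≤ X ω ∧ y0 ≤ Y ω ∧ max (δ1 / Y ω) (δ2 / X ω) ≤ ρ} =
      X ⁻¹' Ici x0 ∩ Y ⁻¹' Ici lam2 := by
    ext ω
    rw [hlam2]
    exact nonOutage_iff hx0 hy0 hρ hρge
  have hweights : δ2 * ΩY / (δ1 * ΩX + δ2 * ΩY) + δ1 * ΩX / (δ1 * ΩX + δ2 * ΩY) = 1 := by
    rw [← add_div, add_comm, div_self (by positivity)]
  rw [hevent, measure_compl_preimage_Ici_inter_of_indepFun hX hY hindep hΩX hΩY hx0.le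
    hlam2pos.le hXdist hYdist, hlam1x]
  congr 1
  linear_combination -Real.exp (-x0 * (1 / ΩX + δ1 / (δ2 * ΩY))) * hweights

/-- closed-form system outage probability for the regime
`δ2 y0 ≤ δ1 x0`, `ρ ≥ δ2/x0`, with `λ1 = max x0 (δ2/ρ)`, `λ2 = max y0 (δ1/ρ)`. -/
theorem stmt_13 {Ωsp : Type*} [MeasurableSpace Ωsp] (μ : Measure Ωsp)
    [IsProbabilityMeasure μ]
    (X Y : Ωsp → ℝ) (hX : Measurable X) (hY : Measurable Y)
    (hindep : IndepFun X Y μ)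
    (ΩX ΩY δ1 δ2 x0 y0 ρ : ℝ)
    (hΩX : 0 < ΩX) (hΩY : 0 < ΩY) (hδ1 : 0 < δ1) (hδ2 : 0 < δ2)
    (hx0 : 0 < x0) (hy0 : 0 < y0) (hρ : 0 < ρ)
    (hreg : δ2 * y0 ≤ δ1 * x0) (hρge : δ2 / x0 ≤ ρ)
    (hXdist : Measure.map X μ = expMeasure (1 / ΩX))
    (hYdist : Measure.map Y μ = expMeasure (1 / ΩY))
    (lam1 lam2 : ℝ) (hlam1 : lam1 = max x0 (δ2 / ρ)) (hlam2 : lam2 = max y0 (δ1 / ρ)) :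
    μ {ω | x0 ≤ X ω ∧ y0 ≤ Y ω ∧ max (δ1 / Y ω) (δ2 / X ω) ≤ ρ}ᶜ =
      ENNReal.ofReal (1
        - Real.exp (-x0 / ΩX) * Real.exp (-lam2 / ΩY)
        - Real.exp (-lam1 * (1 / ΩX + δ1 / (δ2 * ΩY)))
        + (δ2 * ΩY / (δ1 * ΩX + δ2 * ΩY)) * Real.exp (-x0 * (1 / ΩX + δ1 / (δ2 * ΩY)))
        + (δ1 * ΩX / (δ1 * ΩX + δ2 * ΩY)) *
            Real.exp (-lam1 * (1 / ΩX + δ1 / (δ2 * ΩY)))) :=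
  stmt_13_general μ X Y hX hY hindep ΩX ΩY δ1 δ2 x0 y0 ρ hΩX hΩY hδ1 hδ2 hx0 hy0 hρ hρge hXdist
    hYdist lam1 lam2 hlam1 hlam2
end

section
/- Let X and Y be independent exponentially distributed random variables with means Ω_X > 0 and Ω_Y > 0, and let δ1, δ2, x0, y0 > 0. If the relay transmits with the untruncated allocation P_{R,st}(x,y) = max{δ1/y, δ2/x} for x ≥ x0, y ≥ y0 (and 0 otherwise), then the system outage event is exactly the complement of {X ≥ x0 and Y ≥ y0}, and the system outage probability attains its minimum value 1 − e^{−x0/Ω_X}·e^{−y0/Ω_Y}. -/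
/-!
On the decoding region `x ≥ x0, y ≥ y0` the allocation `max (δ1 / y) (δ2 / x)` meets both
SNR constraints `P y ≥ δ1` and `P x ≥ δ2`, so the outage event of `P_{R,st}` is exactly the
complement of that region. Every allocation is in outage off the decoding region, so this is
the least possible outage probability, and independence together with the exponential tails
`P(X ≥ x0) = e^{-x0/Ω_X}`, `P(Y ≥ y0) = e^{-y0/Ω_Y}` evaluates it.
-/

open MeasureTheory ProbabilityTheory Set

lemma le_max_div_mul {a b c : ℝ} (hb : 0 < b) : a ≤ max (a / b) c * b :=
  calc a = a / b * b := (div_mul_cancel₀ a hb.ne').symm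
    _ ≤ max (a / b) c * b := mul_le_mul_of_nonneg_right (le_max_left _ _) hb.le

lemma le_max_div_mul' {a b c : ℝ} (hb : 0 < b) : a ≤ max c (a / b) * b :=
  max_comm c (a / b) ▸ le_max_div_mul hb

namespace ProbabilityTheory

instance (r : ℝ) : NullSingletonClass (expMeasure r) :=
  inferInstanceAs (NullSingletonClass (volume.withDensity (gammaPDF 1 r)))

lemma expMeasure_Ioi {r : ℝ} (hr : 0 < r) {x : ℝ} (hx : 0 ≤ x) :
    expMeasure r (Ioi x) = ENNReal.ofReal (Real.exp (-(r * x))) := by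
  have := isProbabilityMeasure_expMeasure hr
  have h_exp_le_one : Real.exp (-(r * x)) ≤ 1 :=
    Real.exp_le_one_iff.2 (neg_nonpos.2 (mul_nonneg hr.le hx))
  rw [← compl_Iic, prob_compl_eq_one_sub measurableSet_Iic, ← ofReal_cdf,
    cdf_expMeasure_eq hr, if_pos hx, ← ENNReal.ofReal_one,
    ← ENNReal.ofReal_sub _ (sub_nonneg.2 h_exp_le_one), sub_sub_cancel]

lemma expMeasure_Ici {r : ℝ} (hr : 0 < r) {x : ℝ} (hx : 0 ≤ x) :
    expMeasure r (Ici x) = ENNReal.ofReal (Real.exp (-(r * x))) := by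
  rw [← measure_congr (Ioi_ae_eq_Ici' (measure_singleton x)), expMeasure_Ioi hr hx]

lemma measure_preimage_Ici_of_map_eq_expMeasure {Ω : Type*} [MeasurableSpace Ω]
    {μ : Measure Ω} {X : Ω → ℝ} (hX : Measurable X) {m : ℝ} (hm : 0 < m)
    (hXdist : μ.map X = expMeasure (1 / m)) {x : ℝ} (hx : 0 ≤ x) :
    μ (X ⁻¹' Ici x) = ENNReal.ofReal (Real.exp (-x / m)) := by
  rw [← Measure.map_apply hX measurableSet_Ici, hXdist, expMeasure_Ici (by positivity) hx]
  congr 2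
  ring

end ProbabilityTheory

theorem stmt_15_general {Ωsp : Type*} [MeasurableSpace Ωsp] (μ : Measure Ωsp)
    [IsProbabilityMeasure μ]
    (X Y : Ωsp → ℝ) (hX : Measurable X) (hY : Measurable Y)
    (hindep : IndepFun X Y μ)
    (ΩX ΩY δ1 δ2 x0 y0 : ℝ)
    (hΩX : 0 < ΩX) (hΩY : 0 < ΩY)
    (hx0 : 0 < x0) (hy0 : 0 < y0)
    (hXdist : Measure.map X μ = expMeasure (1 / ΩX))
    (hYdist : Measure.map Y μ = expMeasure (1 / ΩY))
    (PRst : ℝ → ℝ → ℝ)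
    (hPRst : ∀ x y, PRst x y =
      if x0 ≤ x ∧ y0 ≤ y then max (δ1 / y) (δ2 / x) else 0) :
    ({ω | ¬(x0 ≤ X ω ∧ y0 ≤ Y ω) ∨
        PRst (X ω) (Y ω) * Y ω < δ1 ∨ PRst (X ω) (Y ω) * X ω < δ2} =
      {ω | x0 ≤ X ω ∧ y0 ≤ Y ω}ᶜ) ∧
    (μ {ω | ¬(x0 ≤ X ω ∧ y0 ≤ Y ω) ∨
        PRst (X ω) (Y ω) * Y ω < δ1 ∨ PRst (X ω) (Y ω) * X ω < δ2} =
      ENNReal.ofReal (1 - Real.exp (-x0 / ΩX) * Real.exp (-y0 / ΩY))) ∧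
    (∀ P : ℝ → ℝ → ℝ, (∀ x y, 0 ≤ P x y) →
      μ {ω | ¬(x0 ≤ X ω ∧ y0 ≤ Y ω) ∨
          P (X ω) (Y ω) * Y ω < δ1 ∨ P (X ω) (Y ω) * X ω < δ2} ≥
        ENNReal.ofReal (1 - Real.exp (-x0 / ΩX) * Real.exp (-y0 / ΩY))) := by
  have h_decoding : {ω | x0 ≤ X ω ∧ y0 ≤ Y ω} = X ⁻¹' Ici x0 ∩ Y ⁻¹' Ici y0 := rfl
  have h_outage_eq : {ω | ¬(x0 ≤ X ω ∧ y0 ≤ Y ω) ∨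
      PRst (X ω) (Y ω) * Y ω < δ1 ∨ PRst (X ω) (Y ω) * X ω < δ2} =
      {ω | x0 ≤ X ω ∧ y0 ≤ Y ω}ᶜ := by
    refine Subset.antisymm ?_ fun ω h ↦ Or.inl h
    rintro ω (h | h | h) (hc : x0 ≤ X ω ∧ y0 ≤ Y ω)
    · exact h hc
    · rw [hPRst, if_pos hc] at h
      exact (le_max_div_mul (hy0.trans_le hc.2)).not_gt h
    · rw [hPRst, if_pos hc] at h
      exact (le_max_div_mul' (hx0.trans_le hc.1)).not_gt h
  have h_outage_prob : μ {ω | x0 ≤ X ω ∧ y0 ≤ Y ω}ᶜ =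
      ENNReal.ofReal (1 - Real.exp (-x0 / ΩX) * Real.exp (-y0 / ΩY)) := by
    rw [h_decoding, prob_compl_eq_one_sub ((hX measurableSet_Ici).inter (hY measurableSet_Ici)),
      hindep.measure_inter_preimage_eq_mul _ _ measurableSet_Ici measurableSet_Ici,
      measure_preimage_Ici_of_map_eq_expMeasure hX hΩX hXdist hx0.le,
      measure_preimage_Ici_of_map_eq_expMeasure hY hΩY hYdist hy0.le,
      ← ENNReal.ofReal_mul (Real.exp_nonneg _), ← ENNReal.ofReal_one,
      ENNReal.ofReal_sub _ (by positivity)]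
  refine ⟨h_outage_eq, h_outage_eq ▸ h_outage_prob, fun P _ ↦ ?_⟩
  exact h_outage_prob ▸ measure_mono fun ω h ↦ Or.inl h

/-- with the untruncated allocation `P_{R,st}(x,y) = max (δ1/y) (δ2/x)` on
`{x ≥ x0, y ≥ y0}` (and `0` otherwise), the system outage event is exactly the complement
of `{X ≥ x0 ∧ Y ≥ y0}`, and the system outage probability attains its minimum value
`1 - e^{-x0/Ω_X} e^{-y0/Ω_Y}` (no channel-state-dependent relay allocation does better). -/
theorem stmt_15 {Ωsp : Type*} [MeasurableSpace Ωsp] (μ : Measure Ωsp)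
    [IsProbabilityMeasure μ]
    (X Y : Ωsp → ℝ) (hX : Measurable X) (hY : Measurable Y)
    (hindep : IndepFun X Y μ)
    (ΩX ΩY δ1 δ2 x0 y0 : ℝ)
    (hΩX : 0 < ΩX) (hΩY : 0 < ΩY) (hδ1 : 0 < δ1) (hδ2 : 0 < δ2)
    (hx0 : 0 < x0) (hy0 : 0 < y0)
    (hXdist : Measure.map X μ = expMeasure (1 / ΩX))
    (hYdist : Measure.map Y μ = expMeasure (1 / ΩY))
    (PRst : ℝ → ℝ → ℝ)
    (hPRst : ∀ x y, PRst x y =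
      if x0 ≤ x ∧ y0 ≤ y then max (δ1 / y) (δ2 / x) else 0) :
    ({ω | ¬(x0 ≤ X ω ∧ y0 ≤ Y ω) ∨
        PRst (X ω) (Y ω) * Y ω < δ1 ∨ PRst (X ω) (Y ω) * X ω < δ2} =
      {ω | x0 ≤ X ω ∧ y0 ≤ Y ω}ᶜ) ∧
    (μ {ω | ¬(x0 ≤ X ω ∧ y0 ≤ Y ω) ∨
        PRst (X ω) (Y ω) * Y ω < δ1 ∨ PRst (X ω) (Y ω) * X ω < δ2} =
      ENNReal.ofReal (1 - Real.exp (-x0 / ΩX) * Real.exp (-y0 / ΩY))) ∧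
    (∀ P : ℝ → ℝ → ℝ, (∀ x y, 0 ≤ P x y) →
      μ {ω | ¬(x0 ≤ X ω ∧ y0 ≤ Y ω) ∨
          P (X ω) (Y ω) * Y ω < δ1 ∨ P (X ω) (Y ω) * X ω < δ2} ≥
        ENNReal.ofReal (1 - Real.exp (-x0 / ΩX) * Real.exp (-y0 / ΩY))) :=
  stmt_15_general μ X Y hX hY hindep ΩX ΩY δ1 δ2 x0 y0 hΩX hΩY hx0 hy0 hXdist hYdist PRst hPRst
end
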